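/- arXiv:1909.05422 — 9 statements merged into one kernel-verified Lean document; each statement's English description precedes it below -/
import Mathlib

section
/- In any totally real number field K, the only decompositions of 2 as a sum α + β with α, β totally positive algebraic integers or zero are the trivial ones: 2 = 1 + 1 and 2 = 0 + 2. -/
/-!
At every real embedding `φ`, the numbers `φ α, φ β ≥ 0` add up to `2`, so `0 ≤ φ (α β) ≤ 1`.
The norm of the algebraic integer `α β` is the product of these values, hence an integer in
`[0, 1]`. If it is `0`, then `α β = 0`. If it is `1`, every factor equals `1`, and `φ α φ β = 1`
together with `φ α + φ β = 2` forces `φ α = 1`, i.e. `α = 1`.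
-/

open NumberField

theorem mul_le_one_of_add_eq_two {R : Type*} [CommRing R] [LinearOrder R] [IsStrictOrderedRing R]
    {a b : R} (h : a + b = 2) : a * b ≤ 1 := by
  nlinarith [sq_nonneg (a - b)]

theorem eq_one_of_add_eq_two_of_mul_eq_one {R : Type*} [CommRing R] [NoZeroDivisors R]
    {a b : R} (h : a + b = 2) (h' : a * b = 1) : a = 1 := by
  have hsq : (a - 1) ^ 2 = 0 := by linear_combination a * h - h'
  exact sub_eq_zero.mp (pow_eq_zero_iff two_ne_zero |>.mp hsq)

namespace NumberField.InfinitePlace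

variable {K : Type*} [Field K] [NumberField K]

theorem one_le_abs_norm {x : 𝓞 K} (hx : x ≠ 0) :
    (1 : ℝ) ≤ (|Algebra.norm ℚ (x : K)| : ℚ) := by
  rw [← Algebra.coe_norm_int]
  exact_mod_cast Int.one_le_abs (Algebra.norm_ne_zero_iff.mpr hx)

theorem eq_one_of_forall_le_one {x : 𝓞 K} (hx0 : x ≠ 0) (hx : ∀ w : InfinitePlace K, w x ≤ 1)
    (w : InfinitePlace K) : w x = 1 := by
  refine (hx w).eq_of_not_lt fun hlt ↦ (one_le_abs_norm hx0).not_gt ?_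
  rw [← prod_eq_abs_norm, ← Finset.prod_const_one]
  refine Finset.prod_lt_prod (fun v _ ↦ pow_pos (pos_iff.mpr ?_) _)
    (fun v _ ↦ pow_le_one₀ (apply_nonneg _ _) (hx v))
    ⟨w, Finset.mem_univ w, pow_lt_one₀ (apply_nonneg _ _) hlt mult_ne_zero⟩
  exact_mod_cast hx0

end NumberField.InfinitePlace

/-- In any totally real number field `K`, the only decompositions of `2` as `α + β` with
`α, β` totally positive algebraic integers or zero are `2 = 1 + 1` and `2 = 0 + 2`. -/
theorem stmt_3 {K : Type*} [Field K] [NumberField K]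
    (hreal : ∀ v : InfinitePlace K, v.IsReal)
    (α β : 𝓞 K)
    (hα : ∀ φ : K →+* ℝ, 0 ≤ φ (α : K))
    (hβ : ∀ φ : K →+* ℝ, 0 ≤ φ (β : K))
    (h : α + β = 2) :
    (α = 1 ∧ β = 1) ∨ (α = 0 ∧ β = 2) ∨ (α = 2 ∧ β = 0) := by
  let φ (w : InfinitePlace K) : K →+* ℝ := InfinitePlace.embedding_of_isReal (hreal w)
  have hsum (ψ : K →+* ℝ) : ψ α + ψ β = 2 := by
    rw [← map_add, ← map_add (algebraMap (𝓞 K) K), h, map_ofNat, map_ofNat]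
  have hplace (w : InfinitePlace K) : w (α * β : 𝓞 K) = φ w α * φ w β := by
    push_cast
    rw [← InfinitePlace.norm_embedding_of_isReal (hreal w), map_mul, Real.norm_eq_abs,
      abs_of_nonneg (mul_nonneg (hα _) (hβ _))]
  rcases eq_or_ne (α * β) 0 with hαβ | hαβ
  · rcases mul_eq_zero.mp hαβ with rfl | rfl
    · exact Or.inr (Or.inl ⟨rfl, by simpa using h⟩)
    · exact Or.inr (Or.inr ⟨by simpa using h, rfl⟩)
  obtain ⟨w⟩ : Nonempty (InfinitePlace K) := inferInstance
  have hw : φ w α * φ w β = 1 := (hplace w).symm.trans <|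
    InfinitePlace.eq_one_of_forall_le_one hαβ
      (fun v ↦ (hplace v).trans_le (mul_le_one_of_add_eq_two (hsum _))) w
  have hα1 : α = 1 := by
    have : φ w α = φ w 1 := by
      rw [map_one]; exact eq_one_of_add_eq_two_of_mul_eq_one (hsum _) hw
    exact_mod_cast (φ w).injective this
  subst hα1
  exact Or.inl ⟨rfl, by linear_combination h⟩
end

section
/- In a totally real biquadratic field K not containing √5, the only decompositions of 3 as a sum α + β with α, β ∈ O_K totally positive or zero are 3 = 1 + 2 and 3 = 0 + 3 (up to order). If √5 ∈ K, the only additional decomposition is 3 = (3+√5)/2 + (3−√5)/2. -/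
open NumberField

lemma Pkey {t : ℝ} (h0 : 0 ≤ t) (h3 : t ≤ 3) :
    16*(t*(t-1)*(t-2)*(t-3)) = ((2*t-3)^2-5)^2 - 16 ∧ (2*t-3)^2 ≤ 9 := by
  constructor
  · ring
  · nlinarith

lemma Pbound {t : ℝ} (h0 : 0 ≤ t) (h3 : t ≤ 3) :
    |t * (t-1) * (t-2) * (t-3)| ≤ 1 := by
  obtain ⟨hid, hu⟩ := Pkey h0 h3
  rw [abs_le]
  constructor
  · nlinarith [sq_nonneg ((2*t-3)^2 - 5)]
  · nlinarith [sq_nonneg (2*t-3)]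

lemma Peq {t : ℝ} (h0 : 0 ≤ t) (h3 : t ≤ 3)
    (h1 : 1 ≤ |t * (t-1) * (t-2) * (t-3)|) : (2*t-3)^2 = 5 := by
  obtain ⟨hid, hu⟩ := Pkey h0 h3
  have hP : t * (t-1) * (t-2) * (t-3) = -1 := by
    rcases abs_cases (t * (t-1) * (t-2) * (t-3)) with ⟨he, _⟩ | ⟨he, _⟩
    · nlinarith [sq_nonneg (2*t-3)]
    · linarith [(abs_le.mp (Pbound h0 h3)).1]
  nlinarith [sq_nonneg ((2*t-3)^2 - 5)]

/-- In a totally real biquadratic field `K = ℚ(√m, √s)`, any decomposition of `3` as a sum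
of two totally positive (or zero) algebraic integers is a trivial one (`1 + 2` or `0 + 3`,
up to order), except for the decomposition `3 = (3+√5)/2 + (3−√5)/2` when `√5 ∈ K`. -/
theorem stmt_4 {K : Type*} [Field K] [NumberField K]
    (hreal : ∀ v : InfinitePlace K, v.IsReal)
    (m s : ℕ) (hm : 1 < m) (hms : m < s) (hsfm : Squarefree m) (hsfs : Squarefree s)
    (hdeg : Module.finrank ℚ K = 4)
    (hsm : ∃ a : K, a ^ 2 = (m : K)) (hss : ∃ a : K, a ^ 2 = (s : K))
    (α β : 𝓞 K)
    (hα : ∀ φ : K →+* ℝ, 0 ≤ φ (α : K))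
    (hβ : ∀ φ : K →+* ℝ, 0 ≤ φ (β : K))
    (h : α + β = 3) :
    (α = 1 ∧ β = 2) ∨ (α = 2 ∧ β = 1) ∨ (α = 0 ∧ β = 3) ∨ (α = 3 ∧ β = 0) ∨
      (∃ u : 𝓞 K, u ^ 2 = 5 ∧ 2 * α = 3 + u ∧ 2 * β = 3 - u) := by
  by_cases hw : α * (α - 1) * (α - 2) * (α - 3) = 0
  · rcases mul_eq_zero.mp hw with hw | h4
    rcases mul_eq_zero.mp hw with hw | h3'
    rcases mul_eq_zero.mp hw with h1' | h2'
    · exact Or.inr (Or.inr (Or.inl ⟨h1', by rw [h1'] at h; linear_combination h⟩))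
    · have : α = 1 := by linear_combination h2'
      exact Or.inl ⟨this, by rw [this] at h; linear_combination h⟩
    · have : α = 2 := by linear_combination h3'
      exact Or.inr (Or.inl ⟨this, by rw [this] at h; linear_combination h⟩)
    · have : α = 3 := by linear_combination h4
      exact Or.inr (Or.inr (Or.inr (Or.inl ⟨this, by rw [this] at h; linear_combination h⟩)))
  · -- main case
    set x : K := (α : K) with hx
    classical
    have hK : (α : K) + (β : K) = 3 := by
      have := congrArg (algebraMap (𝓞 K) K) h
      push_cast [map_ofNat] at this
      exact this
    set z : K := x * (x - 1) * (x - 2) * (x - 3) with hz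
    have hzint : algebraMap (𝓞 K) K (α * (α - 1) * (α - 2) * (α - 3)) = z := by
      push_cast [map_ofNat]; ring
    have hz0 : z ≠ 0 := by
      rw [← hzint]
      exact fun hc => hw (RingOfIntegers.coe_injective (by simpa using hc))
    -- the norm is a nonzero integer
    set n : ℤ := Algebra.norm ℤ (α * (α - 1) * (α - 2) * (α - 3)) with hn
    have hnq : (n : ℚ) = Algebra.norm ℚ z := by
      rw [hn, Algebra.coe_norm_int]; congr 1
    have hn0 : (Algebra.norm ℚ) z ≠ 0 := by
      rw [Algebra.norm_ne_zero_iff]; exact hz0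
    have hn1 : (1 : ℝ) ≤ |(n : ℝ)| := by
      have : n ≠ 0 := fun hc => hn0 (by rw [← hnq, hc]; norm_num)
      have h2 : (1:ℝ) ≤ ((|n| : ℤ) : ℝ) := by exact_mod_cast Int.one_le_abs this
      rwa [Int.cast_abs] at h2
    -- per-embedding analysis
    have key : ∀ σ : K →ₐ[ℚ] ℂ, ‖σ z‖ ≤ 1 ∧
        (1 ≤ ‖σ z‖ → σ ((2*x - 3)^2 - 5) = 0) := by
      intro σ
      have hr : ComplexEmbedding.IsReal (σ : K →+* ℂ) :=
        InfinitePlace.isReal_mk_iff.mp (hreal _)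
      set ψ : K →+* ℝ := hr.embedding with hψ
      have hco : ∀ y : K, ((ψ y : ℝ) : ℂ) = σ y := fun y => hr.coe_embedding_apply y
      set t : ℝ := ψ x with htdef
      have ht0 : 0 ≤ t := hα ψ
      have ht3 : t ≤ 3 := by
        have h1 : ψ ((α:K) + (β:K)) = ψ 3 := by rw [hK]
        rw [map_add, map_ofNat] at h1
        have := hβ ψ
        simp only [htdef, hx]
        linarith
      have hσz : σ z = ((t * (t-1) * (t-2) * (t-3) : ℝ) : ℂ) := by
        have hσx : σ x = ((t : ℝ) : ℂ) := (hco x).symm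
        rw [hz, map_mul, map_mul, map_mul, map_sub, map_sub, map_sub, map_one,
          map_ofNat, map_ofNat, hσx]
        push_cast
        ring
      have habs : ‖σ z‖ = |t * (t-1) * (t-2) * (t-3)| := by
        rw [hσz, Complex.norm_real, Real.norm_eq_abs]
      constructor
      · rw [habs]; exact Pbound ht0 ht3
      · intro hge
        rw [habs] at hge
        have h5 : (2*t - 3)^2 = 5 := Peq ht0 ht3 hge
        have hσx : σ x = ((t : ℝ) : ℂ) := (hco x).symm
        rw [map_sub, map_pow, map_sub, map_mul, hσx, map_ofNat, map_ofNat, map_ofNat]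
        have : ((2:ℂ) * (t:ℂ) - 3)^2 = (((2*t-3)^2 : ℝ) : ℂ) := by push_cast; ring
        rw [this, h5]
        norm_num
    -- product over embeddings
    have hprod : ‖algebraMap ℚ ℂ (Algebra.norm ℚ z)‖ =
        ∏ σ : K →ₐ[ℚ] ℂ, ‖σ z‖ := by
      rw [Algebra.norm_eq_prod_embeddings, norm_prod]
    have hlhs : (1 : ℝ) ≤ ∏ σ : K →ₐ[ℚ] ℂ, ‖σ z‖ := by
      rw [← hprod, ← hnq]
      have : algebraMap ℚ ℂ ((n : ℚ)) = ((n : ℝ) : ℂ) := by push_cast; rfl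
      rw [this, Complex.norm_real, Real.norm_eq_abs]
      exact hn1
    obtain σ₀ : K →ₐ[ℚ] ℂ := IsAlgClosed.lift (R := ℚ) (M := ℂ) (S := K)
    have hone : 1 ≤ ‖σ₀ z‖ := by
      have hrest : ∏ σ ∈ Finset.univ.erase σ₀, ‖σ z‖ ≤ 1 :=
        Finset.prod_le_one (fun i _ => norm_nonneg _) (fun i _ => (key i).1)
      have := Finset.mul_prod_erase Finset.univ (fun σ : K →ₐ[ℚ] ℂ => ‖σ z‖)
        (Finset.mem_univ σ₀)
      calc (1:ℝ) ≤ ∏ σ : K →ₐ[ℚ] ℂ, ‖σ z‖ := hlhs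
        _ = ‖σ₀ z‖ * ∏ σ ∈ Finset.univ.erase σ₀, ‖σ z‖ := this.symm
        _ ≤ ‖σ₀ z‖ * 1 :=
            mul_le_mul_of_nonneg_left hrest (norm_nonneg _)
        _ = ‖σ₀ z‖ := mul_one _
    have hker : (2*x - 3)^2 - 5 = 0 := by
      have := (key σ₀).2 hone
      exact (map_eq_zero σ₀.toRingHom).mp this
    refine Or.inr (Or.inr (Or.inr (Or.inr ⟨2*α - 3, ?_, by ring, by linear_combination 2*h⟩)))
    have hker2 : (2*(α:K) - 3)^2 - 5 = 0 := hker
    apply RingOfIntegers.coe_injective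
    push_cast [map_ofNat]
    linear_combination hker2
end

section
/- Suppose α is an algebraic integer of F = ℚ(√n₁) that is not a square in F but becomes a square in the biquadratic field K = ℚ(√n₁, √n₂). Then every odd rational integer divisor of gcd(n₂, n₃) divides α in O_K. -/
/-!
With `g = gcd(n₁, n₂)` one has `g √n₃ = √n₁ √n₂`, so `β = P + Q √n₂` with `P, Q ∈ F = ℚ(√n₁)`.
Since `√n₂ ∉ F`, `β² ∈ F` forces `PQ = 0`, and `Q ≠ 0` because `α` is not a square in `F`;
hence `β = z √n₂ + w √n₃` with `z, w ∈ ℚ`. Put `U = z² n₂`, `V = w² n₃`: then `α` has trace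
`A = 2(U + V)` and norm `T²` with `T = U - V`, so `A`, `T²` and hence `T` are integers.
Now `(2z)² n₂ = A + 2T` and `(2w)² n₃ = A - 2T` are integers, so `2z, 2w ∈ ℤ` because `n₂` and
`n₃` are squarefree; thus an odd `d` dividing `n₂` and `n₃` divides `A` and `T`, and `α / d`
is a root of the integral polynomial `X² - (A/d) X + (T/d)²`.
-/

theorem Nat.gcd_sq_mul_mul_div_gcd_sq (m n : ℕ) : m.gcd n ^ 2 * (m * n / m.gcd n ^ 2) = m * n :=
  Nat.mul_div_cancel' (sq (m.gcd n) ▸ Nat.mul_dvd_mul (m.gcd_dvd_left n) (m.gcd_dvd_right n))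

theorem Nat.squarefree_mul_div_gcd_sq {m n : ℕ} (hm : Squarefree m) (hn : Squarefree n) :
    Squarefree (m * n / m.gcd n ^ 2) := by
  have hg : 0 < m.gcd n := Nat.gcd_pos_of_pos_left _ (Nat.pos_of_ne_zero hm.ne_zero)
  rw [sq, ← Nat.div_mul_div_comm (m.gcd_dvd_left n) (m.gcd_dvd_right n)]
  exact (Nat.squarefree_mul (Nat.coprime_div_gcd_div_gcd hg)).mpr
    ⟨hm.squarefree_of_dvd (Nat.div_dvd_of_dvd (m.gcd_dvd_left n)),
     hn.squarefree_of_dvd (Nat.div_dvd_of_dvd (m.gcd_dvd_right n))⟩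

theorem Rat.exists_int_eq_of_mul_self_mul_squarefree {q : ℚ} {n : ℕ} (hn : Squarefree n) {N : ℤ}
    (h : q * q * n = N) : ∃ m : ℤ, (m : ℚ) = q := by
  have hden : (q.den * q.den : ℕ) ∣ n := by
    have hq : q * q = N / n := by
      rw [eq_div_iff (by exact_mod_cast hn.ne_zero), h]
    have := Rat.den_dvd N n
    rw [Rat.divInt_eq_div, Int.cast_natCast, ← hq, Rat.mul_self_den] at this
    exact_mod_cast this
  exact ⟨q.num, (Rat.den_eq_one_iff q).mp (Nat.isUnit_iff.mp (hn q.den hden))⟩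

theorem Rat.dvd_of_mul_self_mul_squarefree {q : ℚ} {n : ℕ} (hn : Squarefree n) {N : ℤ}
    (h : q * q * n = N) {d : ℤ} (hd : d ∣ n) : d ∣ N := by
  obtain ⟨m, rfl⟩ := Rat.exists_int_eq_of_mul_self_mul_squarefree hn h
  rw [← (by exact_mod_cast h : m * m * (n : ℤ) = N)]
  exact dvd_mul_of_dvd_right hd _

theorem Nat.eq_of_rat_mul_self_mul_eq_of_squarefree {m n : ℕ} (hm : Squarefree m)
    (hn : Squarefree n) {q : ℚ} (h : q * q * m = n) : m = n := by
  obtain ⟨k, rfl⟩ :=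
    Rat.exists_int_eq_of_mul_self_mul_squarefree hm (N := n) (by exact_mod_cast h)
  have hk : k.natAbs * k.natAbs * m = n := by
    have : (k * k * m : ℤ) = n := by exact_mod_cast h
    rw [← Int.natAbs_mul_self] at this
    exact_mod_cast this
  rw [Nat.isUnit_iff.mp (hn _ (Dvd.intro m hk))] at hk
  simpa using hk

theorem Int.dvd_of_odd_of_dvd_add_of_dvd_sub {d a t : ℤ} (hd : Odd d) (hadd : d ∣ a + 2 * t)
    (hsub : d ∣ a - 2 * t) : d ∣ a ∧ d ∣ t := by
  obtain ⟨k, rfl⟩ := hd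
  have h2 : IsCoprime (2 * k + 1) 2 := ⟨1, -k, by ring⟩
  refine ⟨h2.dvd_of_dvd_mul_left ?_, h2.dvd_of_dvd_mul_left (h2.dvd_of_dvd_mul_left ?_)⟩
  · simpa only [two_mul, add_add_sub_cancel] using dvd_add hadd hsub
  · convert dvd_sub hadd hsub using 1; ring

theorem exists_eq_mul_and_eq_mul_sq_of_odd_of_dvd {n₂ n₃ : ℕ} (hn₂ : Squarefree n₂)
    (hn₃ : Squarefree n₃) {z w : ℚ} {A N : ℤ} (hA : (A : ℚ) = 2 * (z ^ 2 * n₂ + w ^ 2 * n₃))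
    (hN : (N : ℚ) = (z ^ 2 * n₂ - w ^ 2 * n₃) ^ 2) {d : ℤ} (hd : Odd d) (hd₂ : d ∣ n₂)
    (hd₃ : d ∣ n₃) : ∃ A' T' : ℤ, A = d * A' ∧ N = (d * T') ^ 2 := by
  obtain ⟨T, hT⟩ := Rat.exists_int_eq_of_mul_self_mul_squarefree squarefree_one
    (q := z ^ 2 * n₂ - w ^ 2 * n₃) (N := N) (by rw [hN]; ring)
  obtain ⟨⟨A', rfl⟩, ⟨T', rfl⟩⟩ := Int.dvd_of_odd_of_dvd_add_of_dvd_sub hd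
    (Rat.dvd_of_mul_self_mul_squarefree hn₂ (q := 2 * z) (N := A + 2 * T)
      (by push_cast; linear_combination -hA - 2 * hT) hd₂)
    (Rat.dvd_of_mul_self_mul_squarefree hn₃ (q := 2 * w) (N := A - 2 * T)
      (by push_cast; linear_combination -hA + 2 * hT) hd₃)
  refine ⟨A', T', rfl, ?_⟩
  exact_mod_cast (by rw [hN, ← hT] : (N : ℚ) = ((d * T' : ℤ) : ℚ) ^ 2)

theorem irrational_sqrt_of_squarefree {n : ℕ} (hn : Squarefree n) (hn1 : n ≠ 1) :
    Irrational √n := by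
  refine irrational_sqrt_natCast_iff.mpr ?_
  rintro ⟨r, rfl⟩
  exact hn1 (by simp [Nat.isUnit_iff.mp (hn r dvd_rfl)])

theorem Irrational.eq_zero_of_ratCast_add_mul_eq_zero {s : ℝ} (hs : Irrational s) {a b : ℚ}
    (h : (a : ℝ) + b * s = 0) : a = 0 ∧ b = 0 := by
  have hb : b = 0 := by
    by_contra hb
    exact not_irrational_zero (h ▸ (hs.ratCast_mul hb).ratCast_add a)
  subst hb
  exact ⟨by exact_mod_cast (by simpa using h : (a : ℝ) = 0), rfl⟩

theorem Real.sqrt_ne_ratCast_add_mul_sqrt {m n : ℕ} (hm : Squarefree m) (hn : Squarefree n)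
    (hm1 : m ≠ 1) (hn1 : n ≠ 1) (hmn : m ≠ n) (p q : ℚ) : √n ≠ p + q * √m := by
  intro h
  have hsm : √m * √m = m := Real.mul_self_sqrt m.cast_nonneg
  have hsn : √n * √n = n := Real.mul_self_sqrt n.cast_nonneg
  obtain ⟨hcoeff, hpq⟩ := (irrational_sqrt_of_squarefree hm hm1).eq_zero_of_ratCast_add_mul_eq_zero
    (a := p ^ 2 + q ^ 2 * m - n) (b := 2 * p * q)
    (by push_cast; linear_combination -(p + q * √m + √n) * h + hsn - q ^ 2 * hsm)
  rcases mul_eq_zero.mp hpq with hp | rfl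
  · obtain rfl : p = 0 := by simpa using hp
    exact hmn (Nat.eq_of_rat_mul_self_mul_eq_of_squarefree hm hn (q := q)
      (by linear_combination hcoeff))
  · exact irrational_sqrt_of_squarefree hn hn1 ⟨p, by simpa using h.symm⟩

theorem Irrational.add_mul_eq_zero_of_add_add_mul_mul_eq_zero {s t : ℝ} (hs : Irrational s)
    {n : ℚ} (hsn : s * s = n) (ht : ∀ p q : ℚ, t ≠ p + q * s) {c₀ c₁ e₀ e₁ : ℚ}
    (h : c₀ + c₁ * s + (e₀ + e₁ * s) * t = 0) : (e₀ : ℝ) + e₁ * s = 0 := by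
  by_contra he
  set D : ℚ := e₀ ^ 2 - e₁ ^ 2 * n
  have hD : (D : ℝ) = (e₀ + e₁ * s) * (e₀ - e₁ * s) := by
    push_cast [D]; linear_combination e₁ ^ 2 * hsn
  have hD0 : (D : ℝ) ≠ 0 := by
    rw [hD]
    refine mul_ne_zero he fun hconj => he ?_
    obtain ⟨rfl, hneg⟩ := hs.eq_zero_of_ratCast_add_mul_eq_zero (a := e₀) (b := -e₁)
      (by push_cast; linear_combination hconj)
    simp [neg_eq_zero.mp hneg]
  -- multiplying by the conjugate `e₀ - e₁ s` makes the coefficient of `t` rational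
  refine ht (-(c₀ * e₀ - c₁ * e₁ * n) / D) (-(c₁ * e₀ - c₀ * e₁) / D) ?_
  push_cast
  field_simp
  linear_combination (e₀ - e₁ * s) * h + t * hD + c₁ * e₁ * hsn

theorem Irrational.eq_zero_of_sq_eq_of_not_exists_sq_eq {s t : ℝ} (hs : Irrational s) {m n : ℚ}
    (hsm : s * s = m) (htn : t * t = n) (ht : ∀ p q : ℚ, t ≠ p + q * s) {a b x y z w : ℚ}
    (hnotsq : ¬ ∃ p q : ℚ, ((p : ℝ) + q * s) ^ 2 = a + b * s)
    (h : ((x : ℝ) + y * s + (z + w * s) * t) ^ 2 = a + b * s) : x = 0 ∧ y = 0 := by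
  have hprod : ((x : ℝ) + y * s) * (z + w * s) = 0 := by
    have := hs.add_mul_eq_zero_of_add_add_mul_mul_eq_zero hsm ht
      (c₀ := x ^ 2 + y ^ 2 * m + n * (z ^ 2 + w ^ 2 * m) - a)
      (c₁ := 2 * x * y + 2 * n * z * w - b)
      (e₀ := 2 * (x * z + y * w * m)) (e₁ := 2 * (x * w + y * z))
      (by push_cast; linear_combination h - (y ^ 2 + n * w ^ 2 + 2 * y * w * t) * hsm
            - (z + w * s) ^ 2 * htn)
    push_cast at this
    linear_combination this / 2 + y * w * hsm
  have hQ : (z : ℝ) + w * s ≠ 0 := fun hQ => hnotsq ⟨x, y, by rw [← h, hQ]; ring⟩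
  exact hs.eq_zero_of_ratCast_add_mul_eq_zero ((mul_eq_zero.mp hprod).resolve_right hQ)

theorem eq_and_sq_mul_eq_of_sq_eq_of_not_exists_sq_eq {n₁ n₂ n₃ g : ℕ} (hs : Irrational √n₁)
    (ht : ∀ p q : ℚ, √n₂ ≠ p + q * √n₁) (hg : g ≠ 0) (hprod : n₁ * n₂ = g ^ 2 * n₃)
    {a b x y z w : ℚ} (hnotsq : ¬ ∃ p q : ℚ, ((p : ℝ) + q * √n₁) ^ 2 = a + b * √n₁)
    (h : ((x : ℝ) + y * √n₁ + z * √n₂ + w * √n₃) ^ 2 = a + b * √n₁) :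
    a = z ^ 2 * n₂ + w ^ 2 * n₃ ∧ b ^ 2 * n₁ = 4 * (z ^ 2 * n₂) * (w ^ 2 * n₃) := by
  have hs₁ : √n₁ * √n₁ = n₁ := Real.mul_self_sqrt n₁.cast_nonneg
  have hs₂ : √n₂ * √n₂ = n₂ := Real.mul_self_sqrt n₂.cast_nonneg
  have hs₃ : √n₃ * √n₃ = n₃ := Real.mul_self_sqrt n₃.cast_nonneg
  have hgR : (g : ℝ) ≠ 0 := by exact_mod_cast hg
  have hs₁₂ : (g : ℝ) * √n₃ = √n₁ * √n₂ := by
    rw [← Real.sqrt_mul n₁.cast_nonneg, ← Nat.cast_mul, hprod, Nat.cast_mul, Nat.cast_pow,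
      Real.sqrt_mul (by positivity), Real.sqrt_sq g.cast_nonneg]
  have hβ : (x + y * √n₁ + z * √n₂ + w * √n₃ : ℝ) =
      x + y * √n₁ + (z + (w / g : ℚ) * √n₁) * √n₂ := by
    push_cast; field_simp; linear_combination w * hs₁₂
  obtain ⟨rfl, rfl⟩ := hs.eq_zero_of_sq_eq_of_not_exists_sq_eq (x := x) (y := y) (a := a) (b := b)
    (by rw [Rat.cast_natCast]; exact hs₁) (by rw [Rat.cast_natCast]; exact hs₂) ht hnotsq (hβ ▸ h)
  obtain ⟨ha, hb⟩ := hs.eq_zero_of_ratCast_add_mul_eq_zero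
    (a := z ^ 2 * n₂ + w ^ 2 * n₃ - a) (b := 2 * z * w * n₂ / g - b)
    (by push_cast; field_simp
        linear_combination g * h - g * z ^ 2 * hs₂ - g * w ^ 2 * hs₃
          - 2 * z * w * √n₂ * hs₁₂ - 2 * z * w * √n₁ * hs₂)
  have hprodQ : (n₁ * n₂ : ℚ) = g ^ 2 * n₃ := by exact_mod_cast hprod
  refine ⟨by linear_combination -ha, ?_⟩
  rw [show b = 2 * z * w * n₂ / g by linear_combination -hb]
  field_simp
  linear_combination 4 * z ^ 2 * w ^ 2 * n₂ * hprodQ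

open Polynomial in
theorem isIntegral_of_sq_sub_mul_add_eq_zero {R : Type*} [CommRing R] {x : R} {c₁ c₀ : ℤ}
    (h : x ^ 2 - c₁ * x + c₀ = 0) : IsIntegral ℤ x :=
  ⟨X ^ 2 - C c₁ * X + C c₀, by monicity!, by simpa [-eq_intCast] using h⟩

open Polynomial in
theorem exists_intCast_eq_of_isIntegral_of_sq_add_mul_add_eq_zero {L : Type*} [Field L]
    [CharZero L] {x : L} (hx : IsIntegral ℤ x) (hxℚ : x ∉ (algebraMap ℚ L).range) {c₁ c₀ : ℚ}
    (h : x ^ 2 + c₁ * x + c₀ = 0) : (∃ m : ℤ, (m : ℚ) = c₁) ∧ ∃ m : ℤ, (m : ℚ) = c₀ := by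
  have hxℚ' : IsIntegral ℚ x := hx.tower_top
  have hmin : X ^ 2 + C c₁ * X + C c₀ = minpoly ℚ x :=
    eq_of_monic_of_dvd_of_natDegree_le (minpoly.monic hxℚ') (by monicity!)
      (minpoly.dvd ℚ x (by simpa using h))
      (by rw [(by compute_degree! : (X ^ 2 + C c₁ * X + C c₀ : ℚ[X]).natDegree = 2)]
          exact (minpoly.two_le_natDegree_iff hxℚ').mpr hxℚ)
  rw [minpoly.isIntegrallyClosed_eq_field_fractions' ℚ hx] at hmin
  refine ⟨⟨(minpoly ℤ x).coeff 1, ?_⟩, ⟨(minpoly ℤ x).coeff 0, ?_⟩⟩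
  · simpa using (congrArg (coeff · 1) hmin).symm
  · simpa using (congrArg (coeff · 0) hmin).symm

theorem Irrational.exists_intCast_eq_of_isIntegral_ratCast_add_mul {s : ℝ} (hs : Irrational s)
    {n : ℚ} (hsn : s * s = n) {a b : ℚ} (h : IsIntegral ℤ ((a : ℝ) + b * s)) :
    (∃ A : ℤ, (A : ℚ) = 2 * a) ∧ ∃ N : ℤ, (N : ℚ) = a ^ 2 - b ^ 2 * n := by
  rcases eq_or_ne b 0 with rfl | hb
  · have ha : IsIntegral ℤ a := by
      refine (isIntegral_algebraMap_iff (B := ℝ) Rat.cast_injective).mp ?_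
      simpa using h
    obtain ⟨m, hm⟩ := IsIntegrallyClosed.isIntegral_iff.mp ha
    rw [eq_intCast] at hm
    exact ⟨⟨2 * m, by push_cast [hm]; ring⟩, ⟨m ^ 2, by push_cast [hm]; ring⟩⟩
  · have hrat : (a : ℝ) + b * s ∉ (algebraMap ℚ ℝ).range := by
      rintro ⟨r, hr⟩
      refine hb (hs.eq_zero_of_ratCast_add_mul_eq_zero (a := a - r) (b := b) ?_).2
      rw [eq_ratCast] at hr
      push_cast
      linear_combination -hr
    obtain ⟨⟨A, hA⟩, ⟨N, hN⟩⟩ := exists_intCast_eq_of_isIntegral_of_sq_add_mul_add_eq_zero h hrat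
      (c₁ := -(2 * a)) (c₀ := a ^ 2 - b ^ 2 * n) (by push_cast; linear_combination b ^ 2 * hsn)
    exact ⟨⟨-A, by push_cast [hA]; ring⟩, ⟨N, hN⟩⟩

/-- Suppose `α` is an algebraic integer of `F = ℚ(√n₁)` which is not a square in `F` but
becomes a square in the biquadratic field `K = ℚ(√n₁, √n₂)`. Then every odd rational
integer divisor of `gcd(n₂, n₃)` divides `α` in the ring of integers of `K`. -/
theorem stmt_6 (n₁ n₂ n₃ : ℕ) (h1 : 1 < n₁) (h2 : 1 < n₂) (hne : n₁ ≠ n₂)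
    (hsf1 : Squarefree n₁) (hsf2 : Squarefree n₂)
    (hn₃ : n₃ = n₁ * n₂ / (Nat.gcd n₁ n₂) ^ 2)
    (α : ℝ) (hαmem : ∃ a b : ℚ, α = (a : ℝ) + b * Real.sqrt n₁)
    (hαint : IsIntegral ℤ α)
    (hnotsq : ¬ ∃ a b : ℚ, ((a : ℝ) + b * Real.sqrt n₁) ^ 2 = α)
    (hsq : ∃ β : ℝ,
      (∃ x y z w : ℚ,
        β = (x : ℝ) + y * Real.sqrt n₁ + z * Real.sqrt n₂ + w * Real.sqrt n₃) ∧
      IsIntegral ℤ β ∧ β ^ 2 = α)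
    (d : ℤ) (hd : Odd d) (hdvd : d ∣ (Nat.gcd n₂ n₃ : ℤ)) :
    ∃ γ : ℝ,
      (∃ x y z w : ℚ,
        γ = (x : ℝ) + y * Real.sqrt n₁ + z * Real.sqrt n₂ + w * Real.sqrt n₃) ∧
      IsIntegral ℤ γ ∧ α = (d : ℝ) * γ := by
  obtain ⟨a, b, rfl⟩ := hαmem
  obtain ⟨β, ⟨x, y, z, w, rfl⟩, -, hβ⟩ := hsq
  have hs : Irrational √n₁ := irrational_sqrt_of_squarefree hsf1 h1.ne'
  have hs₁ : √n₁ * √n₁ = n₁ := Real.mul_self_sqrt n₁.cast_nonneg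
  obtain ⟨ha, hb⟩ := eq_and_sq_mul_eq_of_sq_eq_of_not_exists_sq_eq hs
    (Real.sqrt_ne_ratCast_add_mul_sqrt hsf1 hsf2 h1.ne' h2.ne' hne)
    (Nat.gcd_pos_of_pos_left _ (by omega)).ne'
    (hn₃ ▸ (Nat.gcd_sq_mul_mul_div_gcd_sq n₁ n₂).symm) hnotsq hβ
  obtain ⟨⟨A, hA⟩, ⟨N, hN⟩⟩ :=
    hs.exists_intCast_eq_of_isIntegral_ratCast_add_mul (n := n₁) (by push_cast; exact hs₁) hαint
  obtain ⟨A', T', rfl, rfl⟩ := exists_eq_mul_and_eq_mul_sq_of_odd_of_dvd hsf2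
    (hn₃ ▸ Nat.squarefree_mul_div_gcd_sq hsf1 hsf2) (by rw [hA, ha]) (by rw [hN, ha, hb]; ring) hd
    (hdvd.trans (Int.natCast_dvd_natCast.mpr (n₂.gcd_dvd_left n₃)))
    (hdvd.trans (Int.natCast_dvd_natCast.mpr (n₂.gcd_dvd_right n₃)))
  have hAR : (d : ℝ) * A' = 2 * a := by exact_mod_cast hA
  have hNR : ((d : ℝ) * T') ^ 2 = a ^ 2 - b ^ 2 * n₁ := by exact_mod_cast hN
  have hd0 : (d : ℝ) ≠ 0 := Int.cast_ne_zero.mpr (by rintro rfl; simp at hd)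
  refine ⟨(a + b * √n₁) / d, ⟨a / d, b / d, 0, 0, by push_cast; ring⟩, ?_, by field_simp⟩
  refine isIntegral_of_sq_sub_mul_add_eq_zero (c₁ := A') (c₀ := T' ^ 2) ?_
  push_cast
  field_simp
  linear_combination hNR - (a + b * √n₁) * hAR + b ^ 2 * hs₁
end

section
/- Let m < s < t be the three squarefree integers associated to a totally real biquadratic field. If √t − √s ≤ 1, then m is even and 2√m > √s. -/
/-!
Write `g = gcd(m, s)`, `m = g a`, `s = g b`, so that `t = a b` and `g < a < b`.
Squaring `√t ≤ √s + 1` gives `(t - s - 1)² ≤ 4s`, i.e. `((a - g) b - 1)² ≤ 4 g b`.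
If `a ≥ g + 2` the left side is at least `(2b - 1)²`, which exceeds `4gb` because `b ≥ g + 3`.
Hence `a = g + 1`, so `m = g (g + 1)` is even, and the inequality becomes `(b - 1)² ≤ 4 g b`,
which forces `b ≤ 4g + 1` and thus `s = g b < 4 g (g + 1) = 4m`.
-/

lemma Nat.mul_div_gcd_sq (m s : ℕ) :
    m * s / Nat.gcd m s ^ 2 = m / Nat.gcd m s * (s / Nat.gcd m s) := by
  rw [sq, Nat.div_mul_div_comm (Nat.gcd_dvd_left m s) (Nat.gcd_dvd_right m s)]

lemma Real.sq_sub_sub_one_le_four_mul_of_sqrt_sub_sqrt_le_one {x y : ℝ} (hx : 0 ≤ x)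
    (hxy : x + 1 ≤ y) (h : √y - √x ≤ 1) : (y - x - 1) ^ 2 ≤ 4 * x := by
  have hy : y ≤ (√x + 1) ^ 2 := (Real.sqrt_le_left (by positivity)).1 (by linarith)
  have hsq := Real.sq_sqrt hx
  have hle : y - x - 1 ≤ 2 * √x := by nlinarith
  nlinarith [Real.sqrt_nonneg x]

lemma Int.eq_add_one_of_sq_mul_sub_mul_sub_one_le {g a b : ℤ} (hg : 0 ≤ g) (hga : g < a)
    (hab : a < b) (h : (a * b - g * b - 1) ^ 2 ≤ 4 * (g * b)) : a = g + 1 := by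
  by_contra hne
  have ha2 : g + 2 ≤ a := by omega
  have hlow : 2 * b - 1 ≤ a * b - g * b - 1 := by nlinarith
  nlinarith

lemma Int.le_four_mul_add_one_of_sq_sub_one_le {g b : ℤ} (hg : 0 ≤ g)
    (h : (b - 1) ^ 2 ≤ 4 * (g * b)) : b ≤ 4 * g + 1 := by
  nlinarith

theorem stmt_8_general (m s t : ℕ) (hm : 1 < m) (hms : m < s) (hst : s < t)
    (ht : t = m * s / Nat.gcd m s ^ 2)
    (h : Real.sqrt t - Real.sqrt s ≤ 1) :
    2 ∣ m ∧ Real.sqrt s < 2 * Real.sqrt m := by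
  set g := Nat.gcd m s
  set a := m / g
  set b := s / g
  have hg : 0 < g := Nat.gcd_pos_of_pos_left s (by omega)
  have hma : m = g * a := (Nat.mul_div_cancel' (Nat.gcd_dvd_left m s)).symm
  have hsb : s = g * b := (Nat.mul_div_cancel' (Nat.gcd_dvd_right m s)).symm
  have htab : t = a * b := ht.trans (Nat.mul_div_gcd_sq m s)
  have hab : a < b := Nat.lt_of_mul_lt_mul_left (hma ▸ hsb ▸ hms)
  have hga : g < a := Nat.lt_of_mul_lt_mul_right (hsb ▸ htab ▸ hst)
  have hkey : ((a * b : ℤ) - g * b - 1) ^ 2 ≤ 4 * (g * b) := by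
    have := Real.sq_sub_sub_one_le_four_mul_of_sqrt_sub_sqrt_le_one (s.cast_nonneg)
      (by exact_mod_cast hst) h
    rw [htab, hsb] at this
    exact_mod_cast this
  have ha : (a : ℤ) = g + 1 :=
    Int.eq_add_one_of_sq_mul_sub_mul_sub_one_le (by positivity) (by exact_mod_cast hga)
      (by exact_mod_cast hab) hkey
  have hb : (b : ℤ) ≤ 4 * g + 1 :=
    Int.le_four_mul_add_one_of_sq_sub_one_le (by positivity) (by rw [ha] at hkey; linarith)
  have hs4m : s < 4 * m := by
    zify [hma, hsb]
    rw [ha]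
    nlinarith
  refine ⟨?_, ?_⟩
  · rw [hma, show a = g + 1 by omega]
    exact (Nat.even_mul_succ_self g).two_dvd
  · rw [Real.sqrt_lt' (by positivity), mul_pow, Real.sq_sqrt (by positivity)]
    exact_mod_cast hs4m

/-- For the three squarefree integers `m < s < t` associated to a totally real biquadratic
field: if `√t − √s ≤ 1`, then `m` is even and `2√m > √s`. -/
theorem stmt_8 (m s t : ℕ) (hm : 1 < m) (hms : m < s) (hst : s < t)
    (hsfm : Squarefree m) (hsfs : Squarefree s) (hsft : Squarefree t)
    (ht : t = m * s / Nat.gcd m s ^ 2)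
    (h : Real.sqrt t - Real.sqrt s ≤ 1) :
    2 ∣ m ∧ Real.sqrt s < 2 * Real.sqrt m :=
  stmt_8_general m s t hm hms hst ht h
end

section
/- In the biquadratic field K = ℚ(√2, √21), the element 7 + √42, which is additively indecomposable in ℚ(√42), decomposes as a sum of two totally positive algebraic integers: 7 + √42 = (7/2 + (3/2)√2 + (1/2)√21 + (1/2)√42) + (7/2 − (3/2)√2 − (1/2)√21 + (1/2)√42). -/
/-!
Since `42 ≡ 2 (mod 4)` is squarefree, the integers of `ℚ(√42)` are exactly `ℤ[√42]`. If
`7 + √42 = (a + b√42) + (a' + b'√42)` with both summands totally positive, then `a + a' = 7` and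
`b + b' = 1`, so one of `b, b'` is nonzero, say `b`; total positivity gives `a² > 42b² ≥ 42`, hence
`a ≥ 7` and `a' ≤ 0`, a contradiction.

In `ℚ(√2, √21)`, `β = (7 + √21)/2 + √2 · (3 + √21)/2` and `γ = (7 - √21)/2 + √2 · (√21 - 3)/2`
are built from algebraic integers. Each conjugate of `β` has product `1` with its image under
`√21 ↦ -√21`, and their sum `7 ± 3√2` is positive, so all conjugates of `β` are positive; the
conjugates of `γ` are those of `β`.
-/

open Polynomial

theorem Rat.exists_int_eq_of_squarefree_mul_sq {d : ℤ} (hd : Squarefree d) {q : ℚ} {k : ℤ}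
    (h : d * q ^ 2 = k) : ∃ z : ℤ, q = z := by
  have hden : (q.den : ℤ) ^ 2 ∣ d * q.num ^ 2 := by
    refine ⟨k, ?_⟩
    have : (d : ℚ) * q.num ^ 2 = q.den ^ 2 * k := by
      rw [← Rat.mul_den_eq_num, ← h]; ring
    exact_mod_cast this
  have hcop : IsCoprime ((q.den : ℤ) ^ 2) (q.num ^ 2) :=
    (Int.isCoprime_iff_gcd_eq_one.2 (by rw [Int.gcd_comm]; exact q.reduced)).pow
  have hunit : IsUnit (q.den : ℤ) := hd _ (by simpa [sq] using hcop.dvd_of_dvd_mul_right hden)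
  have hden1 : q.den = 1 := by simpa using Int.isUnit_iff_natAbs_eq.1 hunit
  exact ⟨q.num, (Rat.coe_int_num_of_den_eq_one hden1).symm⟩

theorem exists_int_eq_of_isIntegral_ratCast {q : ℚ} (h : IsIntegral ℤ (q : ℝ)) :
    ∃ z : ℤ, q = z := by
  rw [← eq_ratCast (algebraMap ℚ ℝ), isIntegral_algebraMap_iff (algebraMap ℚ ℝ).injective,
    IsIntegrallyClosed.isIntegral_iff] at h
  obtain ⟨z, hz⟩ := h
  exact ⟨z, by simp [← hz]⟩

theorem Irrational.eq_and_eq_of_ratCast_add_mul_eq {s : ℝ} (hs : Irrational s) {a b a' b' : ℚ}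
    (h : (a : ℝ) + b * s = a' + b' * s) : a = a' ∧ b = b' := by
  have hb : b = b' := by
    by_contra hne
    refine ((hs.ratCast_mul (sub_ne_zero.2 hne)).ratCast_add (a - a')).ne_rat 0 ?_
    push_cast; linear_combination h
  subst hb
  exact ⟨by exact_mod_cast add_right_cancel h, rfl⟩

section QuadraticIntegers

variable {d : ℕ}

theorem Int.two_dvd_of_four_dvd_sq_sub_mul_sq (hd : d % 4 = 2 ∨ d % 4 = 3) {m v : ℤ}
    (h : 4 ∣ m ^ 2 - d * v ^ 2) : 2 ∣ m ∧ 2 ∣ v := by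
  have hmod : ((m : ZMod 4)) ^ 2 - (d : ZMod 4) * (v : ZMod 4) ^ 2 = 0 := by
    exact_mod_cast (ZMod.intCast_zmod_eq_zero_iff_dvd _ 4).2 h
  have hd' : (d : ZMod 4) = 2 ∨ (d : ZMod 4) = 3 := by
    rw [← ZMod.natCast_mod]; rcases hd with hd | hd <;> simp [hd]
  have mod_four : ∀ x y c : ZMod 4, (c = 2 ∨ c = 3) → x ^ 2 - c * y ^ 2 = 0 → 2 * x = 0 ∧ 2 * y = 0 := by
    decide
  obtain ⟨hm, hv⟩ := mod_four _ _ _ hd' hmod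
  have hm4 : (4 : ℤ) ∣ 2 * m := (ZMod.intCast_zmod_eq_zero_iff_dvd _ 4).1 (by exact_mod_cast hm)
  have hv4 : (4 : ℤ) ∣ 2 * v := (ZMod.intCast_zmod_eq_zero_iff_dvd _ 4).1 (by exact_mod_cast hv)
  omega

theorem irrational_sqrt_of_squarefree_s12 (hsq : Squarefree d) (hd : d ≠ 1) :
    Irrational √d := by
  refine irrational_sqrt_natCast_iff.2 fun ⟨r, hr⟩ => hd ?_
  rw [hr, Nat.isUnit_iff.1 (hsq r (hr ▸ dvd_rfl))]

theorem aeval_quadratic_of_eq_add_or_sub_mul_sqrt {a b : ℚ} {y : ℝ}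
    (hy : y = a + b * √d ∨ y = a - b * √d) :
    aeval y (X ^ 2 - C (2 * a) * X + C (a ^ 2 - d * b ^ 2)) = 0 := by
  have := Real.sq_sqrt (Nat.cast_nonneg (α := ℝ) d)
  rcases hy with rfl | rfl <;>
  · simp only [map_mul, map_sub, map_pow, map_natCast, map_add, aeval_X, aeval_C, eq_ratCast,
      Rat.cast_ofNat]
    linear_combination (b : ℝ) ^ 2 * this

theorem minpoly_add_mul_sqrt (hd : Irrational √d) {a b : ℚ} (hb : b ≠ 0) :
    minpoly ℚ ((a : ℝ) + b * √d) = X ^ 2 - C (2 * a) * X + C (a ^ 2 - d * b ^ 2) := by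
  have hmonic : (X ^ 2 - C (2 * a) * X + C (a ^ 2 - d * b ^ 2)).Monic := by monicity!
  have hroot := aeval_quadratic_of_eq_add_or_sub_mul_sqrt (d := d) (a := a) (b := b) (.inl rfl)
  have hx : IsIntegral ℚ ((a : ℝ) + b * √d) := ⟨_, hmonic, hroot⟩
  refine (eq_of_monic_of_dvd_of_natDegree_le (minpoly.monic hx) hmonic
    (minpoly.dvd ℚ _ hroot) ?_).symm
  have hdeg : (X ^ 2 - C (2 * a) * X + C (a ^ 2 - d * b ^ 2)).natDegree = 2 := by
    compute_degree!
  rw [hdeg, minpoly.two_le_natDegree_iff hx]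
  rintro ⟨r, hr⟩
  exact ((hd.ratCast_mul hb).ratCast_add a).ne_rat r (by simpa using hr.symm)

theorem IsIntegral.sub_mul_sqrt (hd : Irrational √d) {a b : ℚ}
    (h : IsIntegral ℤ ((a : ℝ) + b * √d)) : IsIntegral ℤ ((a : ℝ) - b * √d) := by
  rcases eq_or_ne b 0 with rfl | hb
  · simpa using h
  refine ⟨minpoly ℤ _, minpoly.monic h, ?_⟩
  rw [← aeval_def, ← aeval_map_algebraMap ℚ, ← minpoly.isIntegrallyClosed_eq_field_fractions' ℚ h,
    minpoly_add_mul_sqrt hd hb]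
  exact aeval_quadratic_of_eq_add_or_sub_mul_sqrt (.inr rfl)

theorem exists_int_eq_of_isIntegral_add_mul_sqrt (hsq : Squarefree d)
    (hd : d % 4 = 2 ∨ d % 4 = 3) {a b : ℚ} (h : IsIntegral ℤ ((a : ℝ) + b * √d)) :
    ∃ m n : ℤ, a = m ∧ b = n := by
  have h' := h.sub_mul_sqrt (irrational_sqrt_of_squarefree_s12 hsq (by omega))
  obtain ⟨t, ht⟩ := exists_int_eq_of_isIntegral_ratCast (q := 2 * a) (by
    rw [show ((2 * a : ℚ) : ℝ) = (a + b * √d) + (a - b * √d) by push_cast; ring]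
    exact h.add h')
  obtain ⟨k, hk⟩ := exists_int_eq_of_isIntegral_ratCast (q := a ^ 2 - d * b ^ 2) (by
    rw [show ((a ^ 2 - d * b ^ 2 : ℚ) : ℝ) = (a + b * √d) * (a - b * √d) by
      push_cast; linear_combination (b : ℝ) ^ 2 * Real.sq_sqrt (Nat.cast_nonneg (α := ℝ) d)]
    exact h.mul h')
  obtain ⟨v, hv⟩ := Rat.exists_int_eq_of_squarefree_mul_sq (Int.squarefree_natCast.2 hsq)
    (q := 2 * b) (k := t ^ 2 - 4 * k) (by push_cast; rw [← ht, ← hk]; ring)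
  obtain ⟨⟨m, rfl⟩, ⟨n, rfl⟩⟩ := Int.two_dvd_of_four_dvd_sq_sub_mul_sq hd (m := t) (v := v)
    ⟨k, by qify; rw [← ht, ← hv, ← hk]; ring⟩
  exact ⟨m, n, by push_cast at ht; linarith, by push_cast at hv; linarith⟩

theorem isIntegral_add_mul_sqrt_div_two {m n : ℤ} (h : 4 ∣ m ^ 2 - d * n ^ 2) :
    IsIntegral ℤ ((m + n * √d) / 2 : ℝ) := by
  obtain ⟨k, hk⟩ := h
  refine ⟨X ^ 2 - C m * X + C k, by monicity!, ?_⟩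
  have hk' : (m : ℝ) ^ 2 - d * n ^ 2 = 4 * k := by exact_mod_cast hk
  rw [← aeval_def]
  simp only [eq_intCast, map_add, aeval_sub, map_pow, aeval_X, map_mul, map_intCast]
  linear_combination (n : ℝ) ^ 2 / 4 * Real.sq_sqrt (Nat.cast_nonneg (α := ℝ) d) - hk' / 4

theorem Int.pos_and_mul_sq_lt_sq_of_pos_add_mul_sqrt {a b : ℤ}
    (h₁ : 0 < a + b * √d) (h₂ : 0 < a - b * √d) : 0 < a ∧ d * b ^ 2 < a ^ 2 := by
  have hd := Real.sq_sqrt (Nat.cast_nonneg (α := ℝ) d)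
  have hpos : (0 : ℝ) < a := by linarith
  have hnorm : (d : ℝ) * b ^ 2 < a ^ 2 := by nlinarith [mul_pos h₁ h₂]
  exact ⟨mod_cast hpos, mod_cast hnorm⟩

end QuadraticIntegers

theorem Int.lt_sq_of_mul_sq_lt_sq_of_add_eq_one {d a b a' b' : ℤ} (ha : 0 < a) (ha' : 0 < a')
    (hab : d * b ^ 2 < a ^ 2) (hab' : d * b' ^ 2 < a' ^ 2) (hb : b + b' = 1) :
    d < (a + a' - 1) ^ 2 := by
  rcases eq_or_ne b 0 with rfl | hb0
  · obtain rfl : b' = 1 := by omega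
    nlinarith
  · have : 0 < b ^ 2 := by positivity
    nlinarith

theorem pos_of_mul_eq_one_of_add_pos {α : Type*} [Ring α] [LinearOrder α] [IsStrictOrderedRing α]
    {x y : α} (h : x * y = 1) (hs : 0 < x + y) : 0 < x :=
  (pos_and_pos_or_neg_and_neg_of_mul_pos (h ▸ one_pos)).elim (·.1)
    fun h' => absurd hs (add_neg h'.1 h'.2).asymm

theorem Nat.squarefree_42 : Squarefree 42 := by
  rw [Nat.squarefree_iff_nodup_primeFactorsList (by norm_num)]
  norm_num [Nat.primeFactorsList]

theorem Real.sqrt_42_eq_sqrt_2_mul_sqrt_21 : √42 = √2 * √21 := by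
  rw [← Real.sqrt_mul (by norm_num)]; norm_num

theorem isIntegral_sqrt_two : IsIntegral ℤ √2 :=
  .of_pow two_pos (by rw [Real.sq_sqrt zero_le_two]; exact_mod_cast isIntegral_natCast 2)

theorem isIntegral_beta : IsIntegral ℤ (7 / 2 + 3 / 2 * √2 + 1 / 2 * √21 + 1 / 2 * √42 : ℝ) := by
  have h₁ := isIntegral_add_mul_sqrt_div_two (d := 21) (m := 7) (n := 1) (by norm_num)
  have h₂ := isIntegral_add_mul_sqrt_div_two (d := 21) (m := 3) (n := 1) (by norm_num)
  push_cast [one_mul] at h₁ h₂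
  rw [show (7 / 2 + 3 / 2 * √2 + 1 / 2 * √21 + 1 / 2 * √42 : ℝ)
      = (7 + √21) / 2 + √2 * ((3 + √21) / 2) by
    rw [Real.sqrt_42_eq_sqrt_2_mul_sqrt_21]; ring]
  exact h₁.add (isIntegral_sqrt_two.mul h₂)

theorem isIntegral_gamma : IsIntegral ℤ (7 / 2 - 3 / 2 * √2 - 1 / 2 * √21 + 1 / 2 * √42 : ℝ) := by
  have h₁ := isIntegral_add_mul_sqrt_div_two (d := 21) (m := 7) (n := -1) (by norm_num)
  have h₂ := isIntegral_add_mul_sqrt_div_two (d := 21) (m := -3) (n := 1) (by norm_num)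
  push_cast [one_mul, neg_one_mul, ← sub_eq_add_neg] at h₁ h₂
  rw [show (7 / 2 - 3 / 2 * √2 - 1 / 2 * √21 + 1 / 2 * √42 : ℝ)
      = (7 - √21) / 2 + √2 * ((-3 + √21) / 2) by
    rw [Real.sqrt_42_eq_sqrt_2_mul_sqrt_21]; ring]
  exact h₁.add (isIntegral_sqrt_two.mul h₂)

theorem beta_embedding_pos {e₁ e₂ : ℝ} (he₁ : e₁ ^ 2 = 1) (he₂ : e₂ ^ 2 = 1) :
    0 < 7 / 2 + e₁ * (3 / 2) * √2 + e₂ * (1 / 2) * √21 + e₁ * e₂ * (1 / 2) * √42 := by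
  have hs := Real.sq_sqrt (show (0 : ℝ) ≤ 2 by norm_num)
  have ht := Real.sq_sqrt (show (0 : ℝ) ≤ 21 by norm_num)
  rw [Real.sqrt_42_eq_sqrt_2_mul_sqrt_21]
  set s := √2
  set t := √21
  -- pair with the image under `√21 ↦ -√21`
  refine pos_of_mul_eq_one_of_add_pos
    (y := 7 / 2 + e₁ * (3 / 2) * s - e₂ * (1 / 2) * t - e₁ * e₂ * (1 / 2) * (s * t)) ?_ ?_
  · linear_combination (-3 * s ^ 2) * he₁ - 3 * hs - t ^ 2 * (1 + e₁ * s) ^ 2 / 4 * he₂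
      - (1 + e₁ * s) ^ 2 / 4 * ht
  · have := abs_lt_of_sq_lt_sq' (show (3 * e₁ * s) ^ 2 < 7 ^ 2 by
      linear_combination (9 * s ^ 2) * he₁ + 9 * hs) (by norm_num)
    linarith [this.1]

/-- In `K = ℚ(√2, √21)`, the element `7 + √42` — which is additively indecomposable in the
quadratic field `ℚ(√42)` — decomposes as a sum of two totally positive algebraic integers
of `K`, namely `β = 7/2 + (3/2)√2 + (1/2)√21 + (1/2)√42` and
`γ = 7/2 − (3/2)√2 − (1/2)√21 + (1/2)√42`. Total positivity is expressed via the real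
embeddings (sign flips of the square roots). -/
theorem stmt_12 :
    -- 7 + √42 is indecomposable in ℚ(√42):
    (¬ ∃ a b a' b' : ℚ,
      IsIntegral ℤ ((a : ℝ) + b * Real.sqrt 42) ∧
      IsIntegral ℤ ((a' : ℝ) + b' * Real.sqrt 42) ∧
      0 < (a : ℝ) + b * Real.sqrt 42 ∧ 0 < (a : ℝ) - b * Real.sqrt 42 ∧
      0 < (a' : ℝ) + b' * Real.sqrt 42 ∧ 0 < (a' : ℝ) - b' * Real.sqrt 42 ∧
      7 + Real.sqrt 42 =
        ((a : ℝ) + b * Real.sqrt 42) + ((a' : ℝ) + b' * Real.sqrt 42)) ∧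
    -- yet it decomposes in ℚ(√2, √21) as β + γ with β, γ totally positive integers:
    7 + Real.sqrt 42 =
      (7 / 2 + 3 / 2 * Real.sqrt 2 + 1 / 2 * Real.sqrt 21 + 1 / 2 * Real.sqrt 42) +
      (7 / 2 - 3 / 2 * Real.sqrt 2 - 1 / 2 * Real.sqrt 21 + 1 / 2 * Real.sqrt 42) ∧
    IsIntegral ℤ
      (7 / 2 + 3 / 2 * Real.sqrt 2 + 1 / 2 * Real.sqrt 21 + 1 / 2 * Real.sqrt 42 : ℝ) ∧
    IsIntegral ℤ
      (7 / 2 - 3 / 2 * Real.sqrt 2 - 1 / 2 * Real.sqrt 21 + 1 / 2 * Real.sqrt 42 : ℝ) ∧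
    -- β is totally positive (four embeddings: √2 ↦ ±√2, √21 ↦ ±√21, √42 ↦ product sign):
    (∀ e₁ e₂ : ℝ, (e₁ = 1 ∨ e₁ = -1) → (e₂ = 1 ∨ e₂ = -1) →
      0 < (7 / 2 + e₁ * (3 / 2) * Real.sqrt 2 + e₂ * (1 / 2) * Real.sqrt 21 +
        e₁ * e₂ * (1 / 2) * Real.sqrt 42 : ℝ)) ∧
    -- γ is totally positive:
    (∀ e₁ e₂ : ℝ, (e₁ = 1 ∨ e₁ = -1) → (e₂ = 1 ∨ e₂ = -1) →
      0 < (7 / 2 - e₁ * (3 / 2) * Real.sqrt 2 - e₂ * (1 / 2) * Real.sqrt 21 +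
        e₁ * e₂ * (1 / 2) * Real.sqrt 42 : ℝ)) := by
  refine ⟨?_, by ring, isIntegral_beta, isIntegral_gamma,
    fun e₁ e₂ h₁ h₂ => beta_embedding_pos (sq_eq_one_iff.2 h₁) (sq_eq_one_iff.2 h₂),
    fun e₁ e₂ h₁ h₂ => ?_⟩
  · rintro ⟨a, b, a', b', hα, hα', h₁, h₂, h₁', h₂', hsum⟩
    have h42 : (42 : ℕ) % 4 = 2 ∨ (42 : ℕ) % 4 = 3 := by norm_num
    have hirr : Irrational √42 := by
      simpa using irrational_sqrt_of_squarefree_s12 Nat.squarefree_42 (by norm_num)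
    obtain ⟨ha, hb⟩ :=
      hirr.eq_and_eq_of_ratCast_add_mul_eq (a := 7) (b := 1) (a' := a + a') (b' := b + b')
      (by push_cast; linear_combination hsum)
    obtain ⟨m, n, rfl, rfl⟩ :=
      exists_int_eq_of_isIntegral_add_mul_sqrt Nat.squarefree_42 h42 (by simpa using hα)
    obtain ⟨m', n', rfl, rfl⟩ :=
      exists_int_eq_of_isIntegral_add_mul_sqrt Nat.squarefree_42 h42 (by simpa using hα')
    obtain ⟨hm, hmn⟩ := Int.pos_and_mul_sq_lt_sq_of_pos_add_mul_sqrt (d := 42)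
      (by simpa using h₁) (by simpa using h₂)
    obtain ⟨hm', hmn'⟩ := Int.pos_and_mul_sq_lt_sq_of_pos_add_mul_sqrt (d := 42)
      (by simpa using h₁') (by simpa using h₂')
    have h7 : m + m' = 7 := by exact_mod_cast ha.symm
    have := Int.lt_sq_of_mul_sq_lt_sq_of_add_eq_one hm hm' hmn hmn' (by exact_mod_cast hb.symm)
    rw [h7] at this
    norm_num at this
  · have := beta_embedding_pos (e₁ := -e₁) (e₂ := -e₂) (by simpa using h₁) (by simpa using h₂)
    linear_combination this
end

section
/- Let m ≡ 2 or 3 (mod 4) be squarefree and α = ⌈√m⌉ + √m. Then 2α is a square in ℚ(√m) if and only if m ∈ {3, 5}; in particular (2k+1)α is never a square in ℚ(√m) for any integer k ≥ 0. -/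
/-!
For squarefree `m ≡ 2, 3 (mod 4)` the algebraic integers of `ℚ(√m)` are exactly the `a + b√m`
with `a, b ∈ ℤ`: the trace `2a` and the norm `a² - mb²` of an algebraic integer are integers,
squarefreeness then forces `2b ∈ ℤ`, and `(2a)² ≡ m(2b)² (mod 4)` forces `2a` and `2b` to be even.
Comparing coefficients in `(a + b√m)² = n(c + √m)` gives `2ab = n`, impossible for odd `n`; for
`n = 2` it gives `a = b = ±1` and `m + 1 = 2c`, and as `c = ⌊√m⌋ + 1` this leaves only `m = 3, 5`.
-/

open Polynomial

lemma irrational_sqrt_of_squarefree_s13 {m : ℕ} (hsf : Squarefree m) (h1 : m ≠ 1) :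
    Irrational √(m : ℝ) := by
  rw [irrational_sqrt_natCast_iff]
  rintro ⟨r, rfl⟩
  exact h1 (by simpa using Nat.isUnit_iff.mp (hsf r dvd_rfl))

lemma exists_intCast_eq_coeff_minpoly {x : ℝ} (hx : IsIntegral ℤ x) (i : ℕ) :
    ∃ z : ℤ, (z : ℚ) = (minpoly ℚ x).coeff i :=
  ⟨(minpoly ℤ x).coeff i, by
    rw [minpoly.isIntegrallyClosed_eq_field_fractions' ℚ hx, coeff_map, eq_intCast]⟩

namespace Irrational

variable {r : ℝ}

lemma ratCast_add_ratCast_mul_inj (hr : Irrational r) {a b a' b' : ℚ}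
    (h : (a : ℝ) + b * r = a' + b' * r) : a = a' ∧ b = b' := by
  obtain rfl : b = b' := by
    by_contra hb
    refine hr.ne_rat ((a' - a) / (b - b')) ?_
    have hb' : (b : ℝ) - b' ≠ 0 := sub_ne_zero.mpr (by exact_mod_cast hb)
    push_cast
    field_simp
    linarith
  exact ⟨by exact_mod_cast (add_right_cancel h), rfl⟩

lemma sq_ratCast_add_mul_eq_iff (hr : Irrational r) {d : ℚ} (hd : r ^ 2 = d) (a b n c : ℚ) :
    ((a : ℝ) + b * r) ^ 2 = n * (c + r) ↔ a ^ 2 + d * b ^ 2 = n * c ∧ 2 * a * b = n := by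
  constructor
  · intro h
    refine hr.ratCast_add_ratCast_mul_inj ?_
    push_cast
    linear_combination h - (b : ℝ) ^ 2 * hd
  · rintro ⟨h1, h2⟩
    have h1' : (a : ℝ) ^ 2 + d * b ^ 2 = n * c := by exact_mod_cast h1
    have h2' : 2 * (a : ℝ) * b = n := by exact_mod_cast h2
    linear_combination h1' + r * h2' + (b : ℝ) ^ 2 * hd

lemma minpoly_ratCast_add_mul (hr : Irrational r) {d : ℚ} (hd : r ^ 2 = d) (a : ℚ) {b : ℚ}
    (hb : b ≠ 0) :
    minpoly ℚ ((a : ℝ) + b * r) = X ^ 2 - C (2 * a) * X + C (a ^ 2 - d * b ^ 2) := by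
  set q : ℚ[X] := X ^ 2 - C (2 * a) * X + C (a ^ 2 - d * b ^ 2)
  have hq : q.Monic := by unfold q; monicity!
  have hroot : aeval ((a : ℝ) + b * r) q = 0 := by
    simp only [q, map_add, map_sub, map_pow, map_mul, aeval_X, aeval_C, eq_ratCast]
    push_cast
    linear_combination (b : ℝ) ^ 2 * hd
  have hint : IsIntegral ℚ ((a : ℝ) + b * r) := ⟨q, hq, hroot⟩
  refine (eq_of_monic_of_dvd_of_natDegree_le (minpoly.monic hint) hq
    (minpoly.dvd ℚ _ hroot) ?_).symm
  have : q.natDegree = 2 := by unfold q; compute_degree!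
  rw [this, minpoly.two_le_natDegree_iff hint]
  rintro ⟨x, hx⟩
  exact (hr.ratCast_mul hb).ratCast_add a |>.ne_rat x hx.symm

lemma exists_intCast_trace_norm_of_isIntegral (hr : Irrational r) {d : ℚ} (hd : r ^ 2 = d)
    {a b : ℚ} (hx : IsIntegral ℤ ((a : ℝ) + b * r)) :
    ∃ A N : ℤ, (A : ℚ) = 2 * a ∧ (N : ℚ) = a ^ 2 - d * b ^ 2 := by
  rcases eq_or_ne b 0 with rfl | hb
  · have ha : IsIntegral ℤ (algebraMap ℚ ℝ a) := by simpa using hx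
    obtain ⟨z, hz⟩ := IsIntegrallyClosed.isIntegral_iff.mp
      ((isIntegral_algebraMap_iff (algebraMap ℚ ℝ).injective).mp ha)
    rw [eq_intCast] at hz
    exact ⟨2 * z, z ^ 2, by push_cast [hz]; ring, by push_cast [hz]; ring⟩
  · obtain ⟨A, hA⟩ := exists_intCast_eq_coeff_minpoly hx 1
    obtain ⟨N, hN⟩ := exists_intCast_eq_coeff_minpoly hx 0
    rw [hr.minpoly_ratCast_add_mul hd a hb] at hA hN
    simp only [coeff_add, coeff_sub, coeff_C_mul, coeff_X_pow, coeff_C, coeff_X_one,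
      coeff_X_zero] at hA hN
    exact ⟨-A, N, by push_cast [hA]; norm_num, by rw [hN]; norm_num⟩

end Irrational

lemma exists_intCast_eq_of_squarefree_mul_sq {m : ℕ} (hsf : Squarefree m) {t : ℚ} {N : ℤ}
    (h : (m : ℚ) * t ^ 2 = N) : ∃ T : ℤ, (T : ℚ) = t := by
  refine ⟨t.num, ?_⟩
  suffices hden : t.den = 1 by
    conv_rhs => rw [← Rat.num_div_den t, hden]
    simp
  have hint : (m : ℤ) * t.num ^ 2 = N * (t.den : ℤ) ^ 2 := by
    rw [← Rat.num_div_den t] at h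
    field_simp at h
    rw [mul_comm N]
    exact_mod_cast h
  have hcop : IsCoprime ((t.den : ℤ) ^ 2) (t.num ^ 2) := by
    refine IsCoprime.pow ?_
    rw [Int.isCoprime_iff_gcd_eq_one, Int.gcd, Int.natAbs_natCast]
    exact t.reduced.symm
  have hdvd : (t.den : ℤ) ^ 2 ∣ m := hcop.dvd_of_dvd_mul_right ⟨N, by rw [hint]; ring⟩
  rw [← Nat.isUnit_iff]
  exact hsf _ (by rw [← sq]; exact_mod_cast hdvd)

lemma two_dvd_of_four_dvd_sq_sub_mul_sq {m A B : ℤ} (hm : m % 4 = 2 ∨ m % 4 = 3)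
    (h : 4 ∣ A ^ 2 - m * B ^ 2) : 2 ∣ A ∧ 2 ∣ B := by
  have hmod : ∀ A B M : ZMod 4, (M = 2 ∨ M = 3) → A ^ 2 = M * B ^ 2 → 2 * A = 0 ∧ 2 * B = 0 := by
    decide
  have hM : (m : ZMod 4) = 2 ∨ (m : ZMod 4) = 3 := by
    rw [← ZMod.intCast_mod m 4]
    rcases hm with hm | hm <;> rw [Nat.cast_ofNat, hm] <;> decide
  have h0 : (A : ZMod 4) ^ 2 = m * B ^ 2 := by
    rw [← sub_eq_zero]
    exact_mod_cast (ZMod.intCast_zmod_eq_zero_iff_dvd _ 4).mpr h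
  obtain ⟨hA, hB⟩ := hmod A B m hM h0
  have hA' := (ZMod.intCast_zmod_eq_zero_iff_dvd (2 * A) 4).mp (by exact_mod_cast hA)
  have hB' := (ZMod.intCast_zmod_eq_zero_iff_dvd (2 * B) 4).mp (by exact_mod_cast hB)
  omega

lemma eq_nat_sqrt_add_one {m c : ℕ} (hc1 : √(m : ℝ) < c)
    (hc2 : ∀ k : ℕ, √(m : ℝ) < k → c ≤ k) : c = Nat.sqrt m + 1 := by
  refine le_antisymm (hc2 _ (by exact_mod_cast Real.real_sqrt_lt_nat_sqrt_succ)) ?_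
  exact_mod_cast Real.nat_sqrt_le_real_sqrt.trans_lt hc1

lemma add_one_eq_two_mul_sqrt_add_one_iff {m : ℕ} :
    m + 1 = 2 * (Nat.sqrt m + 1) ↔ m = 3 ∨ m = 5 := by
  constructor
  · intro h
    have hs := Nat.sqrt_le' m
    have hs' : m < (Nat.sqrt m + 1) * (Nat.sqrt m + 1) := Nat.lt_succ_sqrt m
    have : Nat.sqrt m ≤ 2 := by nlinarith
    interval_cases Nat.sqrt m <;> omega
  · rintro (rfl | rfl) <;> norm_num [Nat.sqrt]

lemma exists_intCast_eq_of_isIntegral_add_mul_sqrt {m : ℕ} (hsf : Squarefree m)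
    (hm4 : m % 4 = 2 ∨ m % 4 = 3) {a b : ℚ} (hx : IsIntegral ℤ ((a : ℝ) + b * √m)) :
    ∃ A B : ℤ, (A : ℚ) = a ∧ (B : ℚ) = b := by
  have hsq : √(m : ℝ) ^ 2 = ((m : ℚ) : ℝ) := by simp
  obtain ⟨A, N, hA, hN⟩ :=
    (irrational_sqrt_of_squarefree_s13 hsf (by omega)).exists_intCast_trace_norm_of_isIntegral hsq hx
  obtain ⟨B, hB⟩ := exists_intCast_eq_of_squarefree_mul_sq hsf (t := 2 * b) (N := A ^ 2 - 4 * N)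
    (by push_cast; rw [hA, hN]; ring)
  have h4 : (4 : ℤ) ∣ A ^ 2 - m * B ^ 2 :=
    ⟨N, by exact_mod_cast (by push_cast; rw [hA, hB, hN]; ring :
      ((A ^ 2 - m * B ^ 2 : ℤ) : ℚ) = (4 * N : ℤ))⟩
  obtain ⟨⟨A, rfl⟩, ⟨B, rfl⟩⟩ := two_dvd_of_four_dvd_sq_sub_mul_sq (by omega) h4
  exact ⟨A, B, by push_cast at hA; linarith, by push_cast at hB; linarith⟩

lemma exists_int_of_isIntegral_of_sq_eq_mul {m : ℕ} (hsf : Squarefree m)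
    (hm4 : m % 4 = 2 ∨ m % 4 = 3) {a b n c : ℚ} (hx : IsIntegral ℤ ((a : ℝ) + b * √m))
    (h : ((a : ℝ) + b * √m) ^ 2 = n * (c + √m)) :
    ∃ A B : ℤ, (A : ℚ) ^ 2 + m * B ^ 2 = n * c ∧ 2 * (A * B : ℚ) = n := by
  obtain ⟨A, B, rfl, rfl⟩ := exists_intCast_eq_of_isIntegral_add_mul_sqrt hsf hm4 hx
  have hsq : √(m : ℝ) ^ 2 = ((m : ℚ) : ℝ) := by simp
  obtain ⟨h1, h2⟩ :=
    ((irrational_sqrt_of_squarefree_s13 hsf (by omega)).sq_ratCast_add_mul_eq_iff hsq A B n c).mp h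
  exact ⟨A, B, h1, by linarith⟩

theorem stmt_13_general (m : ℕ) (hsf : Squarefree m)
    (hm4 : m % 4 = 2 ∨ m % 4 = 3)
    (c : ℕ) (hc1 : Real.sqrt m < c) (hc2 : ∀ k : ℕ, Real.sqrt m < k → c ≤ k) :
    ((∃ a b : ℚ, IsIntegral ℤ ((a : ℝ) + b * Real.sqrt m) ∧
        ((a : ℝ) + b * Real.sqrt m) ^ 2 = 2 * ((c : ℝ) + Real.sqrt m)) ↔
      (m = 3 ∨ m = 5)) ∧
    ∀ k : ℕ, ¬ ∃ a b : ℚ, IsIntegral ℤ ((a : ℝ) + b * Real.sqrt m) ∧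
      ((a : ℝ) + b * Real.sqrt m) ^ 2 = (2 * (k : ℝ) + 1) * ((c : ℝ) + Real.sqrt m) := by
  have hc := eq_nat_sqrt_add_one hc1 hc2
  refine ⟨⟨fun ⟨a, b, hx, h⟩ ↦ ?_, fun hm ↦ ?_⟩, fun k ⟨a, b, hx, h⟩ ↦ ?_⟩
  · obtain ⟨A, B, h1, h2⟩ :=
      exists_int_of_isIntegral_of_sq_eq_mul hsf hm4 hx (n := 2) (c := c) (by exact_mod_cast h)
    have hAB : A * B = 1 := by exact_mod_cast (by linarith : (A * B : ℚ) = 1)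
    have hmc : (m : ℚ) + 1 = 2 * c := by
      rcases Int.eq_one_or_neg_one_of_mul_eq_one' hAB with ⟨rfl, rfl⟩ | ⟨rfl, rfl⟩ <;>
        norm_num at h1 <;> linarith
    rw [← add_one_eq_two_mul_sqrt_add_one_iff, ← hc]
    exact_mod_cast hmc
  · have hmc : (m : ℝ) + 1 = 2 * c := by
      exact_mod_cast (hc ▸ add_one_eq_two_mul_sqrt_add_one_iff.mpr hm : m + 1 = 2 * c)
    have hsqrt : IsIntegral ℤ √(m : ℝ) :=
      .of_pow two_pos (by rw [Real.sq_sqrt m.cast_nonneg]; exact isIntegral_natCast m)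
    refine ⟨1, 1, by simpa using isIntegral_one.add hsqrt, ?_⟩
    push_cast
    linear_combination Real.sq_sqrt m.cast_nonneg + hmc
  · obtain ⟨A, B, -, h2⟩ := exists_int_of_isIntegral_of_sq_eq_mul hsf hm4 hx
      (n := 2 * k + 1) (c := c) (by exact_mod_cast h)
    have : 2 * (A * B) = 2 * k + 1 := by exact_mod_cast h2
    omega

/-- Let `m ≡ 2` or `3 (mod 4)` be squarefree, `c = ⌈√m⌉` the smallest integer greater than
`√m`, and `α = c + √m`. Then `2α` is a square (of an algebraic integer) in `ℚ(√m)` if and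
only if `m ∈ {3, 5}`; and `(2k+1)α` is never a square in `ℚ(√m)` for any `k ≥ 0`. -/
theorem stmt_13 (m : ℕ) (hm : 1 < m) (hsf : Squarefree m)
    (hm4 : m % 4 = 2 ∨ m % 4 = 3)
    (c : ℕ) (hc1 : Real.sqrt m < c) (hc2 : ∀ k : ℕ, Real.sqrt m < k → c ≤ k) :
    ((∃ a b : ℚ, IsIntegral ℤ ((a : ℝ) + b * Real.sqrt m) ∧
        ((a : ℝ) + b * Real.sqrt m) ^ 2 = 2 * ((c : ℝ) + Real.sqrt m)) ↔
      (m = 3 ∨ m = 5)) ∧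
    ∀ k : ℕ, ¬ ∃ a b : ℚ, IsIntegral ℤ ((a : ℝ) + b * Real.sqrt m) ∧
      ((a : ℝ) + b * Real.sqrt m) ^ 2 = (2 * (k : ℝ) + 1) * ((c : ℝ) + Real.sqrt m) :=
  stmt_13_general m hsf hm4 c hc1 hc2
end

section
/- Let α_m denote ⌈√m⌉ + √m if m ≡ 2,3 (mod 4) and (⌈√m⌉_odd + √m)/2 if m ≡ 1 (mod 4). The element 2α_m − 1 is a square in O_K for a biquadratic field K = ℚ(√m, √s) if and only if m = 2. -/
open Real Polynomial

lemma irr_sqrt (n : ℕ) (h1 : 1 < n) (hsf : Squarefree n) : Irrational (Real.sqrt n) := by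
  rw [irrational_sqrt_natCast_iff]
  rintro ⟨k, hk⟩
  have := hsf k (by rw [hk])
  rw [Nat.isUnit_iff] at this
  simp [this] at hk
  omega

lemma rat_sq_int (q : ℚ) (n : ℤ) (h : q ^ 2 = (n : ℚ)) : ∃ z : ℤ, (z : ℚ) = q := by
  have hint : IsIntegral ℤ q := by
    refine ⟨X ^ 2 - C n, monic_X_pow_sub_C n two_ne_zero, ?_⟩
    simp only [eval₂_sub, eval₂_pow, eval₂_X, eval₂_C]
    rw [h]; simp
  exact IsIntegrallyClosed.isIntegral_iff.mp hint

lemma sqrt_mul_nat (x y k z : ℕ) (h : x * y = k ^ 2 * z) :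
    Real.sqrt x * Real.sqrt y = (k : ℝ) * Real.sqrt z := by
  have hxy : ((x : ℝ)) * (y : ℝ) = ((k : ℝ)) ^ 2 * (z : ℝ) := by exact_mod_cast congrArg (Nat.cast (R := ℝ)) h
  rw [← Real.sqrt_mul (by positivity), hxy, Real.sqrt_mul (by positivity),
    Real.sqrt_sq (by positivity)]

lemma lin_irr {a : ℝ} (ha : Irrational a) (p q : ℚ) (h : (p : ℝ) + q * a = 0) :
    p = 0 ∧ q = 0 := by
  by_cases hq : q = 0
  · subst hq; norm_num at h; exact ⟨by exact_mod_cast h, rfl⟩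
  · exfalso
    refine ha ⟨-p / q, ?_⟩
    have hq' : ((q : ℚ) : ℝ) ≠ 0 := by exact_mod_cast hq
    push_cast
    field_simp
    linarith

lemma lin_irr' {a : ℝ} (ha : Irrational a) (p q : ℚ) (h : (p : ℝ) + q * a = 0) :
    p = 0 ∧ q = 0 := by
  by_cases hq : q = 0
  · subst hq; norm_num at h; exact ⟨by exact_mod_cast h, rfl⟩
  · exfalso
    refine ha ⟨-p / q, ?_⟩
    have hq' : ((q : ℚ) : ℝ) ≠ 0 := by exact_mod_cast hq
    push_cast
    field_simp
    linarith

lemma indep {a b : ℝ} (ha : Irrational a) (hb : Irrational b) (hab : Irrational (a * b))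
    {ma sb : ℚ} (ha2 : a ^ 2 = (ma : ℝ)) (hb2 : b ^ 2 = (sb : ℝ)) (p q r u : ℚ)
    (h : (p : ℝ) + q * a + r * b + u * (a * b) = 0) : p = 0 ∧ q = 0 ∧ r = 0 ∧ u = 0 := by
  by_cases hru : (r : ℝ) + u * a = 0
  · obtain ⟨hr, hu⟩ := lin_irr' ha r u hru
    have h1 : (p : ℝ) + q * a = 0 := by
      rw [hr, hu] at h; push_cast at h; linarith
    obtain ⟨hp, hq⟩ := lin_irr' ha p q h1
    exact ⟨hp, hq, hr, hu⟩
  · exfalso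
    have hd : r ^ 2 - u ^ 2 * ma ≠ 0 := by
      intro h0
      have hu0 : u ≠ 0 := by
        rintro rfl
        have : r = 0 := by
          have : r ^ 2 = 0 := by linarith
          exact pow_eq_zero_iff (n := 2) (by norm_num) |>.mp this
        apply hru; rw [this]; push_cast; ring
      have hfac : (a - ((r / u : ℚ) : ℝ)) * (a + ((r / u : ℚ) : ℝ)) = 0 := by
        have huR : ((u : ℚ) : ℝ) ≠ 0 := by exact_mod_cast hu0
        have : a ^ 2 = (((r / u) ^ 2 : ℚ) : ℝ) := by
          rw [ha2]
          have : ma = (r / u) ^ 2 := by field_simp; linarith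
          exact_mod_cast congrArg (Rat.cast (K := ℝ)) this
        push_cast at this ⊢
        ring_nf
        ring_nf at this
        linarith
      rcases mul_eq_zero.mp hfac with h1 | h1
      · exact ha ⟨r / u, by linarith⟩
      · exact ha ⟨-(r / u), by push_cast at h1 ⊢; linarith⟩
    set D : ℚ := r ^ 2 - u ^ 2 * ma with hDdef
    set E : ℚ := q * u * ma - p * r with hEdef
    set F : ℚ := p * u - q * r with hFdef
    have key : (D : ℝ) * b = (E : ℝ) + (F : ℝ) * a := by
      simp only [hDdef, hEdef, hFdef]
      push_cast
      linear_combination ((r : ℝ) - u * a) * h + ((q : ℝ) * u + (u : ℝ) ^ 2 * b) * ha2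
    have hEF : (2 : ℝ) * E * F * a = (D : ℝ) ^ 2 * sb - (E : ℝ) ^ 2 - (F : ℝ) ^ 2 * ma := by
      linear_combination ((D : ℝ)) ^ 2 * hb2 - ((F : ℝ)) ^ 2 * ha2 -
        ((D : ℝ) * b + (E : ℝ) + (F : ℝ) * a) * key
    have hDR : ((D : ℚ) : ℝ) ≠ 0 := by exact_mod_cast hd
    by_cases hEF0 : 2 * E * F = 0
    · have : E = 0 ∨ F = 0 := by
        rcases mul_eq_zero.mp hEF0 with h1 | h1
        · left; rcases mul_eq_zero.mp h1 with h2 | h2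
          · norm_num at h2
          · exact h2
        · right; exact h1
      rcases this with hE | hF
      · -- E = 0 : D * b = F * a, so a*b rational
        refine hab ⟨F * ma / D, ?_⟩
        rw [Rat.cast_div, div_eq_iff hDR]
        push_cast
        have hE' : (E : ℝ) = 0 := by exact_mod_cast hE
        linear_combination -a * key - (F : ℝ) * ha2 - a * hE'
      · refine hb ⟨E / D, ?_⟩
        rw [Rat.cast_div, div_eq_iff hDR]
        have hF' : (F : ℝ) = 0 := by exact_mod_cast hF
        linear_combination -key - a * hF'
    · refine ha ⟨(D ^ 2 * sb - E ^ 2 - F ^ 2 * ma) / (2 * E * F), ?_⟩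
      have hR : ((2 * E * F : ℚ) : ℝ) ≠ 0 := by exact_mod_cast hEF0
      rw [Rat.cast_div, div_eq_iff hR]
      push_cast
      linear_combination -hEF

lemma key_extract (m s t g m' s' : ℕ) (hm : 1 < m) (hgpos : 0 < g) (hm'pos : 0 < m') (hgm : g * m' = m)
    (hms : m * s = g ^ 2 * t) (hmt : m * t = m' ^ 2 * s) (hst : s * t = s' ^ 2 * m)
    (ham : Irrational (Real.sqrt m)) (has : Irrational (Real.sqrt s))
    (habs : Irrational (Real.sqrt m * Real.sqrt s))
    (A B : ℚ) (hB : B ≠ 0) (x y z w : ℚ)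
    (hsq : ((x : ℝ) + y * Real.sqrt m + z * Real.sqrt s + w * Real.sqrt t) ^ 2
      = (A : ℝ) + (B : ℝ) * Real.sqrt m) :
    (x ^ 2 + m * y ^ 2 = A ∧ 2 * x * y = B ∧ z = 0 ∧ w = 0) ∨
    (s * z ^ 2 + t * w ^ 2 = A ∧ 2 * (s' : ℚ) * z * w = B ∧ x = 0 ∧ y = 0) := by
  have hMS : Real.sqrt m * Real.sqrt s = (g : ℝ) * Real.sqrt t := sqrt_mul_nat m s g t hms
  have hMT : Real.sqrt m * Real.sqrt t = (m' : ℝ) * Real.sqrt s := sqrt_mul_nat m t m' s hmt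
  have hST : Real.sqrt s * Real.sqrt t = (s' : ℝ) * Real.sqrt m := sqrt_mul_nat s t s' m hst
  have hm2 : Real.sqrt m ^ 2 = ((m : ℕ) : ℝ) := Real.sq_sqrt (by positivity)
  have hs2 : Real.sqrt s ^ 2 = ((s : ℕ) : ℝ) := Real.sq_sqrt (by positivity)
  have ht2 : Real.sqrt t ^ 2 = ((t : ℕ) : ℝ) := Real.sq_sqrt (by positivity)
  have hgQ : (g : ℚ) ≠ 0 := by positivity
  have hgR : ((g : ℕ) : ℝ) ≠ 0 := by positivity
  have hreal : ((x ^ 2 + m * y ^ 2 + s * z ^ 2 + t * w ^ 2 - A : ℚ) : ℝ)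
      + ((2 * x * y + 2 * s' * z * w - B : ℚ) : ℝ) * Real.sqrt m
      + ((2 * x * z + 2 * m' * y * w : ℚ) : ℝ) * Real.sqrt s
      + (((2 * x * w + 2 * g * y * z) / g : ℚ) : ℝ) * (Real.sqrt m * Real.sqrt s) = 0 := by
    rw [hMS]
    have hdiv : (((2 * x * w + 2 * g * y * z) / g : ℚ) : ℝ) * ((g : ℝ) * Real.sqrt t)
        = ((2 * x * w + 2 * g * y * z : ℚ) : ℝ) * Real.sqrt t := by
      rw [Rat.cast_div]
      push_cast
      field_simp
    rw [hdiv]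
    push_cast
    linear_combination hsq - (y : ℝ) ^ 2 * hm2 - (z : ℝ) ^ 2 * hs2 - (w : ℝ) ^ 2 * ht2
      - 2 * z * w * hST - 2 * y * w * hMT - 2 * y * z * hMS
  obtain ⟨hP, hQ, hR, hU⟩ := indep ham has habs hm2 hs2 _ _ _ _ hreal
  have hU' : 2 * x * w + 2 * g * y * z = 0 := by
    have := div_eq_zero_iff.mp hU
    tauto
  have hP' : x ^ 2 + m * y ^ 2 + s * z ^ 2 + t * w ^ 2 = A := by linarith
  have hQ' : 2 * x * y + 2 * s' * z * w = B := by linarith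
  have hmQ : (m' : ℚ) ≠ 0 := by positivity
  by_cases hy0 : y = 0
  · by_cases hx0 : x = 0
    · right
      refine ⟨by rw [hx0, hy0] at hP'; linarith, by rw [hx0, hy0] at hQ'; linarith, hx0, hy0⟩
    · left
      have hz : z = 0 := by
        rw [hy0] at hR
        have : x * z = 0 := by linarith
        rcases mul_eq_zero.mp this with h1 | h1
        · exact absurd h1 hx0
        · exact h1
      have hw : w = 0 := by
        rw [hy0] at hU'
        have : x * w = 0 := by linarith
        rcases mul_eq_zero.mp this with h1 | h1
        · exact absurd h1 hx0
        · exact h1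
      refine ⟨by rw [hz, hw] at hP'; linarith, by rw [hz, hw] at hQ'; linarith, hz, hw⟩
  · -- y ≠ 0 : force z = w = 0
    have hzw : z * w = 0 := by
      by_contra hzw0
      have hxz : x * z = -(m' * y * w) := by linarith
      have hxw : x * w = -(g * y * z) := by linarith
      have hmul : x ^ 2 * (z * w) = (m : ℚ) * y ^ 2 * (z * w) := by
        have h1 : (x * z) * (x * w) = (m' * y * w) * (g * y * z) := by
          rw [hxz, hxw]; ring
        have hgmQ : (g : ℚ) * m' = m := by exact_mod_cast congrArg (Nat.cast (R := ℚ)) hgm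
        linear_combination h1 + y ^ 2 * z * w * hgmQ
      have hxy2 : x ^ 2 = m * y ^ 2 := by
        have := mul_right_cancel₀ hzw0 hmul
        exact this
      have : Real.sqrt m = ((|x / y| : ℚ) : ℝ) := by
        have hyQ : (y : ℚ) ≠ 0 := hy0
        have hcast : ((m : ℕ) : ℝ) = (((x / y) ^ 2 : ℚ) : ℝ) := by
          have hq : ((x / y) ^ 2 : ℚ) = (m : ℚ) := by
            rw [div_pow, div_eq_iff (pow_ne_zero 2 hyQ)]
            linear_combination hxy2
          rw [hq]
          norm_cast
        rw [hcast]
        rw [show (((x / y) ^ 2 : ℚ) : ℝ) = (((x / y : ℚ) : ℝ)) ^ 2 by push_cast; ring]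
        rw [Real.sqrt_sq_eq_abs, Rat.cast_abs]
      exact absurd ⟨_, this.symm⟩ ham
    rcases mul_eq_zero.mp hzw with hz | hw
    · have hw : w = 0 := by
        rw [hz] at hR
        have : m' * (y * w) = 0 := by linarith
        have := mul_eq_zero.mp this
        rcases this with h1 | h1
        · exact absurd h1 hmQ
        · rcases mul_eq_zero.mp h1 with h2 | h2
          · exact absurd h2 hy0
          · exact h2
      left
      refine ⟨by rw [hz, hw] at hP'; linarith, by rw [hz, hw] at hQ'; linarith, hz, hw⟩
    · have hz : z = 0 := by
        rw [hw] at hU'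
        have : (g : ℚ) * (y * z) = 0 := by linarith
        rcases mul_eq_zero.mp this with h1 | h1
        · exact absurd h1 hgQ
        · rcases mul_eq_zero.mp h1 with h2 | h2
          · exact absurd h2 hy0
          · exact h2
      left
      refine ⟨by rw [hz, hw] at hP'; linarith, by rw [hz, hw] at hQ'; linarith, hz, hw⟩

/-- Let `α_m = ⌈√m⌉ + √m` if `m ≡ 2, 3 (mod 4)` and `α_m = (⌈√m⌉_odd + √m)/2` if
`m ≡ 1 (mod 4)`. In a totally real biquadratic field `K = ℚ(√m, √s)` (with third square
root `√t`), the element `2α_m − 1` is a square in `O_K` if and only if `m = 2`. -/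
theorem stmt_14 (m s t : ℕ) (hm : 1 < m) (hms : m < s)
    (hsfm : Squarefree m) (hsfs : Squarefree s)
    (ht : t = m * s / Nat.gcd m s ^ 2)
    (c : ℕ) (hc1 : Real.sqrt m < c) (hc2 : ∀ k : ℕ, Real.sqrt m < k → c ≤ k)
    (c' : ℕ) (hc'odd : Odd c') (hc'1 : Real.sqrt m < c')
    (hc'2 : ∀ k : ℕ, Odd k → Real.sqrt m < k → c' ≤ k) :
    (∃ β : ℝ,
      (∃ x y z w : ℚ,
        β = (x : ℝ) + y * Real.sqrt m + z * Real.sqrt s + w * Real.sqrt t) ∧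
      IsIntegral ℤ β ∧
      β ^ 2 = 2 * (if m % 4 = 1 then ((c' : ℝ) + Real.sqrt m) / 2
        else (c : ℝ) + Real.sqrt m) - 1) ↔ m = 2 := by
  constructor
  · rintro ⟨β, ⟨x, y, z, w, hβ⟩, hint, hsq⟩
    clear hint
    subst hβ
    -- ℕ setup
    set g := Nat.gcd m s with hgdef
    have hm0 : 0 < m := by omega
    have hs0 : 0 < s := by omega
    have hgpos : 0 < g := Nat.gcd_pos_of_pos_left s hm0
    obtain ⟨m', hm'⟩ : g ∣ m := Nat.gcd_dvd_left m s
    obtain ⟨s', hs'⟩ : g ∣ s := Nat.gcd_dvd_right m s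
    have hm'pos : 0 < m' := by
      rcases Nat.eq_zero_or_pos m' with h | h
      · rw [h, Nat.mul_zero] at hm'; omega
      · exact h
    have hgle : g ≤ m := Nat.le_of_dvd hm0 ⟨m', hm'⟩
    have hs'2 : 2 ≤ s' := by
      rcases Nat.lt_or_ge s' 2 with h | h
      · exfalso
        interval_cases s' <;> simp at hs' <;> omega
      · exact h
    have hts : t = m' * s' := by
      have hms2 : m * s = g ^ 2 * (m' * s') := by rw [hm', hs']; ring
      rw [ht, hms2, Nat.mul_div_cancel_left _ (by positivity)]
    have hmsEq : m * s = g ^ 2 * t := by rw [hts, hm', hs']; ring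
    have hmtEq : m * t = m' ^ 2 * s := by rw [hts, hm', hs']; ring
    have hstEq : s * t = s' ^ 2 * m := by rw [hts, hm', hs']; ring
    have hsfm' : Squarefree m' := hsfm.squarefree_of_dvd ⟨g, by rw [hm']; ring⟩
    have hsfs' : Squarefree s' := hsfs.squarefree_of_dvd ⟨g, by rw [hs']; ring⟩
    have hcop : Nat.Coprime m' s' := by
      have h1 : m / g = m' := by rw [hm', Nat.mul_div_cancel_left _ hgpos]
      have h2 : s / g = s' := by rw [hs', Nat.mul_div_cancel_left _ hgpos]
      rw [← h1, ← h2]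
      exact Nat.coprime_div_gcd_div_gcd hgpos
    have hsft : Squarefree t := by
      rw [hts]; exact (Nat.squarefree_mul hcop).mpr ⟨hsfm', hsfs'⟩
    have ht1 : 1 < t := by
      rw [hts]
      calc 1 < s' := by omega
        _ ≤ m' * s' := Nat.le_mul_of_pos_left _ hm'pos
    have ham := irr_sqrt m hm hsfm
    have has := irr_sqrt s (by omega) hsfs
    have hat := irr_sqrt t ht1 hsft
    have habs : Irrational (Real.sqrt m * Real.sqrt s) := by
      rw [sqrt_mul_nat m s g t hmsEq]
      exact hat.natCast_mul (by omega)
    -- bounds on c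
    have hsqm1 : (1 : ℝ) < Real.sqrt m := by
      rw [show (1 : ℝ) = Real.sqrt 1 by simp]
      exact Real.sqrt_lt_sqrt (by norm_num) (by exact_mod_cast hm)
    have hcge2 : 2 ≤ c := by
      have h1 : (1 : ℝ) < (c : ℝ) := lt_trans hsqm1 hc1
      have : 1 < c := by exact_mod_cast h1
      omega
    have hcm : ((c : ℤ) - 1) ^ 2 ≤ (m : ℤ) := by
      have hle : ((c : ℝ) - 1) ≤ Real.sqrt m := by
        by_contra hlt
        push_neg at hlt
        have hlt' : Real.sqrt m < ((c - 1 : ℕ) : ℝ) := by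
          rw [Nat.cast_sub (by omega : 1 ≤ c)]
          exact_mod_cast hlt
        have := hc2 (c - 1) hlt'
        omega
      have h2 : ((c : ℝ) - 1) ^ 2 ≤ (m : ℝ) := by
        nlinarith [Real.sq_sqrt (show (0 : ℝ) ≤ (m : ℝ) by positivity),
          Real.sqrt_nonneg ((m : ℕ) : ℝ)]
      exact_mod_cast h2
    have hstQ : (s : ℚ) * t = (s' : ℚ) ^ 2 * m := by exact_mod_cast congrArg (Nat.cast (R := ℚ)) hstEq
    have hcmN : (c - 1) * (c - 1) ≤ m := by
      have hcast : ((c - 1 : ℕ) : ℤ) = (c : ℤ) - 1 := by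
        push_cast [Nat.cast_sub (by omega : 1 ≤ c)]
        ring
      have h1 : (((c - 1 : ℕ)) : ℤ) * ((c - 1 : ℕ) : ℤ) ≤ (m : ℤ) := by
        rw [hcast, ← pow_two]
        exact hcm
      exact_mod_cast h1
    have hmZ : (2 : ℤ) ≤ (m : ℤ) := by exact_mod_cast hm
    by_cases h41 : m % 4 = 1
    · -- m ≡ 1 (mod 4) : always impossible
      exfalso
      rw [if_pos h41] at hsq
      have hsq' : ((x : ℝ) + y * Real.sqrt m + z * Real.sqrt s + w * Real.sqrt t) ^ 2
          = (((c' : ℚ) - 1 : ℚ) : ℝ) + (((1 : ℚ)) : ℝ) * Real.sqrt m := by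
        push_cast
        linear_combination hsq
      have hkey := key_extract m s t g m' s' hm hgpos hm'pos hm'.symm hmsEq hmtEq hstEq
        ham has habs ((c' : ℚ) - 1) 1 one_ne_zero x y z w hsq'
      obtain ⟨i, hi⟩ := hc'odd
      have hiZ : (c' : ℤ) = 2 * (i : ℤ) + 1 := by exact_mod_cast hi
      have hKex : ∃ K : ℤ, (K : ℤ) ^ 2 = ((c' : ℤ) - 1) ^ 2 - m := by
        rcases hkey with ⟨hA, hB2, _, _⟩ | ⟨hA, hB2, _, _⟩
        · have hkq : (x ^ 2 - m * y ^ 2) ^ 2 = ((((c' : ℤ) - 1) ^ 2 - m : ℤ) : ℚ) := by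
            push_cast
            linear_combination (x ^ 2 + m * y ^ 2 + ((c' : ℚ) - 1)) * hA - m * (2 * x * y + 1) * hB2
          obtain ⟨K, hK⟩ := rat_sq_int _ _ hkq
          refine ⟨K, ?_⟩
          have : ((K : ℚ)) ^ 2 = ((((c' : ℤ) - 1) ^ 2 - m : ℤ) : ℚ) := by rw [hK]; exact hkq
          exact_mod_cast this
        · have hkq : (s * z ^ 2 - t * w ^ 2) ^ 2 = ((((c' : ℤ) - 1) ^ 2 - m : ℤ) : ℚ) := by
            push_cast
            linear_combination (s * z ^ 2 + t * w ^ 2 + ((c' : ℚ) - 1)) * hA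
              - m * (2 * (s' : ℚ) * z * w + 1) * hB2 - 4 * z ^ 2 * w ^ 2 * hstQ
          obtain ⟨K, hK⟩ := rat_sq_int _ _ hkq
          refine ⟨K, ?_⟩
          have : ((K : ℚ)) ^ 2 = ((((c' : ℤ) - 1) ^ 2 - m : ℤ) : ℚ) := by rw [hK]; exact hkq
          exact_mod_cast this
      obtain ⟨K, hK2⟩ := hKex
      rcases Int.even_or_odd K with ⟨j, hj⟩ | ⟨j, hj⟩
      · rw [hj] at hK2
        have h4d : (4 : ℤ) ∣ (m : ℤ) := ⟨(i : ℤ) ^ 2 - j ^ 2, by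
          linear_combination hK2 + ((c' : ℤ) + 2 * i - 1) * hiZ⟩
        have h4n : (4 : ℕ) ∣ m := by exact_mod_cast h4d
        omega
      · rw [hj] at hK2
        have h4d : (4 : ℤ) ∣ (m : ℤ) + 1 := ⟨(i : ℤ) ^ 2 - j ^ 2 - j, by
          linear_combination hK2 + ((c' : ℤ) + 2 * i - 1) * hiZ⟩
        have h4n : (4 : ℕ) ∣ m + 1 := by exact_mod_cast h4d
        omega
    · rw [if_neg h41] at hsq
      have hsq' : ((x : ℝ) + y * Real.sqrt m + z * Real.sqrt s + w * Real.sqrt t) ^ 2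
          = ((2 * (c : ℚ) - 1 : ℚ) : ℝ) + (((2 : ℚ)) : ℝ) * Real.sqrt m := by
        push_cast
        linear_combination hsq
      have hkey := key_extract m s t g m' s' hm hgpos hm'pos hm'.symm hmsEq hmtEq hstEq
        ham has habs (2 * (c : ℚ) - 1) 2 two_ne_zero x y z w hsq'
      rcases hkey with ⟨hA, hB2, _, _⟩ | ⟨hA, hB2, hx0, hy0⟩
      · -- case β = x + y√m
        have hkq : (x ^ 2 - m * y ^ 2) ^ 2 = (((2 * (c : ℤ) - 1) ^ 2 - 4 * m : ℤ) : ℚ) := by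
          push_cast
          linear_combination (x ^ 2 + m * y ^ 2 + (2 * (c : ℚ) - 1)) * hA - m * (2 * x * y + 2) * hB2
        obtain ⟨K, hK⟩ := rat_sq_int _ _ hkq
        have hK2 : (K : ℤ) ^ 2 = (2 * (c : ℤ) - 1) ^ 2 - 4 * m := by
          have : ((K : ℚ)) ^ 2 = (((2 * (c : ℤ) - 1) ^ 2 - 4 * m : ℤ) : ℚ) := by rw [hK]; exact hkq
          exact_mod_cast this
        rcases Int.even_or_odd K with ⟨j, hj⟩ | ⟨j, hj⟩
        · exfalso
          rw [hj] at hK2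
          have h4d : (4 : ℤ) ∣ 1 := ⟨j ^ 2 - (c : ℤ) ^ 2 + c + m, by linear_combination -hK2⟩
          omega
        · have hKQ : x ^ 2 - m * y ^ 2 = 2 * (j : ℚ) + 1 := by
            rw [← hK, hj]; push_cast; ring
          have hx2 : x ^ 2 = (((c : ℤ) + j : ℤ) : ℚ) := by push_cast; linarith
          obtain ⟨X, hX⟩ := rat_sq_int x _ hx2
          have hmy2 : ((m : ℚ) * y) ^ 2 = (((m : ℤ) * (2 * (c : ℤ) - 1) - m * X ^ 2 : ℤ) : ℚ) := by
            push_cast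
            linear_combination (m : ℚ) * hA + (m : ℚ) * ((X : ℚ) + x) * hX
          obtain ⟨MY, hMY⟩ := rat_sq_int _ _ hmy2
          have hMY2 : MY ^ 2 = (m : ℤ) * (2 * (c : ℤ) - 1) - m * X ^ 2 := by
            have : ((MY : ℚ)) ^ 2 = (((m : ℤ) * (2 * (c : ℤ) - 1) - m * X ^ 2 : ℤ) : ℚ) := by
              rw [hMY]; exact hmy2
            exact_mod_cast this
          have hmdvd : (m : ℤ) ∣ MY := by
            have hdd : (m : ℤ) ∣ MY ^ 2 := ⟨(2 * (c : ℤ) - 1) - X ^ 2, by linear_combination hMY2⟩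
            exact ((Int.squarefree_natCast.mpr hsfm).dvd_pow_iff_dvd (by norm_num)).mp hdd
          obtain ⟨Y, hY⟩ := hmdvd
          have hyY : (y : ℚ) = ((Y : ℤ) : ℚ) := by
            have hmQ0 : (m : ℚ) ≠ 0 := by positivity
            have h3 : (m : ℚ) * y = (m : ℚ) * (Y : ℚ) := by
              rw [← hMY, hY]; push_cast; ring
            exact mul_left_cancel₀ hmQ0 h3
          have hXY : X * Y = 1 := by
            have hxy1 : (x : ℚ) * y = 1 := by linarith
            have : ((X * Y : ℤ) : ℚ) = 1 := by push_cast; rw [hX, ← hyY]; exact hxy1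
            exact_mod_cast this
          have hsq1 : X ^ 2 = 1 ∧ Y ^ 2 = 1 := by
            rcases Int.mul_eq_one_iff_eq_one_or_neg_one.mp hXY with ⟨hX1, hY1⟩ | ⟨hX1, hY1⟩ <;>
              constructor <;> simp [hX1, hY1]
          have hx21 : (x : ℚ) ^ 2 = 1 := by
            rw [← hX]
            exact_mod_cast hsq1.1
          have hy21 : (y : ℚ) ^ 2 = 1 := by
            rw [hyY]
            exact_mod_cast hsq1.2
          have hmc : (m : ℚ) + 2 = 2 * c := by
            linear_combination hA - hx21 - (m : ℚ) * hy21
          have hmc' : m + 2 = 2 * c := by exact_mod_cast hmc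
          have hd2 : (c - 1) * (c - 1) ≤ (c - 1) * 2 := le_trans hcmN (by omega)
          have hdle : c - 1 ≤ 2 := Nat.le_of_mul_le_mul_left hd2 (by omega)
          have hm24 : m = 2 ∨ m = 4 := by omega
          rcases hm24 with h | h
          · exact h
          · exfalso
            rw [h] at hsfm
            have := hsfm 2 (by norm_num)
            rw [Nat.isUnit_iff] at this
            norm_num at this
      · -- case β = z√s + w√t : impossible
        exfalso
        have hB' : (s' : ℚ) * z * w = 1 := by linarith
        have hz0 : z ≠ 0 := by rintro rfl; norm_num at hB'
        have hw0 : w ≠ 0 := by rintro rfl; norm_num at hB'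
        have hkq : (s * z ^ 2 - t * w ^ 2) ^ 2 = (((2 * (c : ℤ) - 1) ^ 2 - 4 * m : ℤ) : ℚ) := by
          push_cast
          linear_combination (s * z ^ 2 + t * w ^ 2 + (2 * (c : ℚ) - 1)) * hA
            - 4 * m * ((s' : ℚ) * z * w + 1) * hB' - 4 * z ^ 2 * w ^ 2 * hstQ
        obtain ⟨K, hK⟩ := rat_sq_int _ _ hkq
        have hK2 : (K : ℤ) ^ 2 = (2 * (c : ℤ) - 1) ^ 2 - 4 * m := by
          have : ((K : ℚ)) ^ 2 = (((2 * (c : ℤ) - 1) ^ 2 - 4 * m : ℤ) : ℚ) := by rw [hK]; exact hkq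
          exact_mod_cast this
        rcases Int.even_or_odd K with ⟨j, hj⟩ | ⟨j, hj⟩
        · rw [hj] at hK2
          have h4d : (4 : ℤ) ∣ 1 := ⟨j ^ 2 - (c : ℤ) ^ 2 + c + m, by linear_combination -hK2⟩
          omega
        · have hKQ : (s : ℚ) * z ^ 2 - t * w ^ 2 = 2 * (j : ℚ) + 1 := by
            rw [← hK, hj]; push_cast; ring
          have hsz2 : (s : ℚ) * z ^ 2 = (c : ℚ) + j := by linarith
          have hsz : ((s : ℚ) * z) ^ 2 = (((s : ℤ) * ((c : ℤ) + j) : ℤ) : ℚ) := by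
            push_cast
            linear_combination (s : ℚ) * hsz2
          obtain ⟨E, hE⟩ := rat_sq_int _ _ hsz
          have hE2 : E ^ 2 = (s : ℤ) * ((c : ℤ) + j) := by
            have : ((E : ℚ)) ^ 2 = (((s : ℤ) * ((c : ℤ) + j) : ℤ) : ℚ) := by rw [hE]; exact hsz
            exact_mod_cast this
          have hsdvd : (s : ℤ) ∣ E := by
            have hdd : (s : ℤ) ∣ E ^ 2 := ⟨(c : ℤ) + j, hE2⟩
            exact ((Int.squarefree_natCast.mpr hsfs).dvd_pow_iff_dvd (by norm_num)).mp hdd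
          obtain ⟨Z, hZ⟩ := hsdvd
          have hzZ : (z : ℚ) = ((Z : ℤ) : ℚ) := by
            have hsQ0 : (s : ℚ) ≠ 0 := by positivity
            have h3 : (s : ℚ) * z = (s : ℚ) * (Z : ℚ) := by
              rw [← hE, hZ]; push_cast; ring
            exact mul_left_cancel₀ hsQ0 h3
          have hZ0 : Z ≠ 0 := by
            rintro rfl
            exact hz0 (by exact_mod_cast hzZ)
          have hB0 : (c : ℤ) + j = (s : ℤ) * Z ^ 2 := by
            have : (c : ℚ) + j = (s : ℚ) * ((Z : ℚ)) ^ 2 := by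
              rw [← hsz2, hzZ]
            exact_mod_cast this
          have hZ1 : (1 : ℤ) ≤ Z ^ 2 := by
            have h1 : (1 : ℤ) ≤ |Z| := Int.one_le_abs hZ0
            calc (1 : ℤ) = 1 * 1 := by ring
              _ ≤ |Z| * |Z| := mul_le_mul h1 h1 (by norm_num) (abs_nonneg Z)
              _ = Z * Z := abs_mul_abs_self Z
              _ = Z ^ 2 := (pow_two Z).symm
          have hsZle : (s : ℤ) ≤ (c : ℤ) + j := by
            rw [hB0]
            calc (s : ℤ) = (s : ℤ) * 1 := by ring
              _ ≤ (s : ℤ) * Z ^ 2 := mul_le_mul_of_nonneg_left hZ1 (by positivity)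
          have htw : (t : ℚ) * w ^ 2 = 2 * (c : ℚ) - 1 - ((c : ℚ) + j) := by linarith
          have hA0 : (1 : ℤ) ≤ 2 * (c : ℤ) - 1 - ((c : ℤ) + j) := by
            have ht0 : (0 : ℚ) < (t : ℚ) := by exact_mod_cast (by omega : 0 < t)
            have hw2 : (0 : ℚ) < w ^ 2 := pow_two_pos_of_ne_zero hw0
            have hq : (0 : ℚ) < 2 * (c : ℚ) - 1 - ((c : ℚ) + j) := by
              rw [← htw]; exact mul_pos ht0 hw2
            have hZq : (0 : ℤ) < 2 * (c : ℤ) - 1 - ((c : ℤ) + j) := by exact_mod_cast hq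
            omega
          have hsleZ : (s : ℤ) ≤ 2 * (c : ℤ) - 2 := by omega
          have hd2 : (c - 1) * (c - 1) ≤ (c - 1) * 2 := le_trans hcmN (by omega)
          have hdle : c - 1 ≤ 2 := Nat.le_of_mul_le_mul_left hd2 (by omega)
          have hc3 : c ≤ 3 := by omega
          interval_cases c <;> omega
  · intro h2
    subst h2
    rw [if_neg (by norm_num)]
    have hcast2 : ((2 : ℕ) : ℝ) = 2 := by norm_num
    have hsq2 : Real.sqrt 2 ^ 2 = 2 := Real.sq_sqrt (by norm_num)
    have h1lt : (1 : ℝ) < Real.sqrt 2 := by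
      nlinarith [Real.sqrt_nonneg 2]
    have hcle : c ≤ 2 := by
      apply hc2 2
      rw [hcast2]
      nlinarith [Real.sqrt_nonneg 2]
    have hcge : 2 ≤ c := by
      have h1 : (1 : ℝ) < (c : ℝ) := by rw [hcast2] at hc1; exact lt_trans h1lt hc1
      exact_mod_cast h1
    have hceq : c = 2 := le_antisymm hcle hcge
    have hsqrt2int : IsIntegral ℤ (Real.sqrt 2) := by
      refine ⟨Polynomial.X ^ 2 - Polynomial.C 2, Polynomial.monic_X_pow_sub_C 2 two_ne_zero, ?_⟩
      simp only [Polynomial.eval₂_sub, Polynomial.eval₂_pow, Polynomial.eval₂_X,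
        Polynomial.eval₂_C]
      rw [hsq2]
      norm_num
    refine ⟨1 + Real.sqrt 2, ⟨1, 1, 0, 0, by rw [hcast2]; push_cast; ring⟩,
      isIntegral_one.add hsqrt2int, ?_⟩
    rw [hceq, hcast2]
    push_cast
    linear_combination hsq2
end

section
/- Let K = ℚ(√n₁) be a real quadratic field with n₁ ≠ 2 and fundamental unit ε. Then 2ε is a square in O_K if and only if the Pell equation x² − n₁y² = ±2 has an integer solution. -/
noncomputable section
open Polynomial

lemma aux_irr {n : ℕ} (hn : 1 < n) (hsf : Squarefree n) : Irrational (Real.sqrt n) := by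
  rw [irrational_sqrt_natCast_iff]
  rintro ⟨k, hk⟩
  have h1 : IsUnit k := hsf k (by rw [hk])
  have h2 : k = 1 := Nat.isUnit_iff.mp h1
  subst h2; omega

lemma aux_unique {n : ℕ} (hn : 1 < n) (hsf : Squarefree n) {a b c d : ℚ}
    (h : (a : ℝ) + b * Real.sqrt n = c + d * Real.sqrt n) : a = c ∧ b = d := by
  by_cases hbd : b = d
  · subst hbd
    refine ⟨?_, rfl⟩
    have := add_right_cancel h
    exact_mod_cast this
  · exfalso
    have hirr := aux_irr hn hsf
    have hdb : (d : ℝ) - b ≠ 0 := by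
      intro h0
      apply hbd
      have : (d:ℝ) = b := by linarith
      exact_mod_cast this.symm
    have : Real.sqrt n = ((a - c) / (d - b) : ℚ) := by
      push_cast
      field_simp
      nlinarith [h]
    exact hirr ⟨_, this.symm⟩

lemma aux_den {n : ℕ} (hsf : Squarefree n) (q : ℚ) (k : ℤ) (h : (n:ℚ) * q^2 = k) :
    ∃ z : ℤ, (z:ℚ) = q := by
  have hq : (q.num : ℚ) = q * q.den := by
    rw [Rat.mul_den_eq_num]
  have h2 : (n : ℚ) * q.num^2 = k * (q.den:ℚ)^2 := by
    rw [hq]; ring_nf; ring_nf at h; nlinarith [h]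
  have h3 : (n : ℤ) * q.num^2 = k * (q.den:ℤ)^2 := by exact_mod_cast h2
  have hdvd : (q.den:ℤ)^2 ∣ (n:ℤ) * q.num^2 := ⟨k, by linarith [h3]⟩
  have hcop : IsCoprime (q.den:ℤ) q.num := by
    rw [Int.isCoprime_iff_gcd_eq_one, Int.gcd_comm]
    exact_mod_cast q.reduced
  have hdvd2 : (q.den:ℤ)^2 ∣ (n:ℤ) := by
    have hc2 : IsCoprime ((q.den:ℤ)^2) (q.num^2) := hcop.pow
    exact hc2.dvd_of_dvd_mul_right hdvd
  have hunit : IsUnit (q.den:ℤ) := by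
    apply Int.squarefree_natCast.mpr hsf
    rwa [← sq]
  have hden : q.den = 1 := by
    rcases Int.isUnit_iff.mp hunit with h1 | h1 <;> omega
  exact ⟨q.num, by rw [← Rat.num_div_den q, hden]; simp⟩

lemma aux_int_of {n : ℕ} (a b : ℚ) (s m : ℤ) (hs : (s:ℚ) = 2*a) (hm : (m:ℚ) = a^2 - n*b^2) :
    IsIntegral ℤ ((a:ℝ) + b * Real.sqrt n) := by
  refine ⟨X^2 - (C s * X - C m), monic_X_pow_sub (by
    apply lt_of_le_of_lt (degree_sub_le _ _)
    simp only [max_lt_iff]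
    exact ⟨lt_of_le_of_lt (degree_C_mul_X_le s) (by norm_num),
      lt_of_le_of_lt degree_C_le (by norm_num)⟩), ?_⟩
  have hsr : (s:ℝ) = 2*a := by exact_mod_cast hs
  have hmr : (m:ℝ) = (a:ℝ)^2 - n*b^2 := by exact_mod_cast hm
  have hsq : Real.sqrt n ^ 2 = (n:ℝ) := Real.sq_sqrt (by positivity)
  simp only [eval₂_sub, eval₂_pow, eval₂_X, eval₂_mul, eval₂_C]
  rw [show ((algebraMap ℤ ℝ) s) = (s:ℝ) from rfl, show ((algebraMap ℤ ℝ) m) = (m:ℝ) from rfl,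
    hsr, hmr]
  nlinarith [hsq]

lemma aux_rat_int {a : ℚ} (h : IsIntegral ℤ ((a:ℝ))) : ∃ z : ℤ, (z:ℚ) = a := by
  have h2 : IsIntegral ℤ a := (isIntegral_algHom_iff ((algebraMap ℚ ℝ).toIntAlgHom)
      (algebraMap ℚ ℝ).injective).mp (show IsIntegral ℤ ((algebraMap ℚ ℝ).toIntAlgHom a) from h)
  obtain ⟨z, hz⟩ := IsIntegrallyClosed.isIntegral_iff.mp h2
  exact ⟨z, by exact_mod_cast hz⟩

lemma aux_int_char {n : ℕ} (hn : 1 < n) (hsf : Squarefree n) {a b : ℚ}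
    (h : IsIntegral ℤ ((a:ℝ) + b * Real.sqrt n)) :
    ∃ s t m : ℤ, (s:ℚ) = 2*a ∧ (t:ℚ) = 2*b ∧ (m:ℚ) = a^2 - n*b^2 := by
  suffices hsm : ∃ s m : ℤ, (s:ℚ) = 2*a ∧ (m:ℚ) = a^2 - n*b^2 by
    obtain ⟨s, m, hs, hm⟩ := hsm
    obtain ⟨t, ht⟩ := aux_den hsf (2*b) (s^2 - 4*m) (by push_cast; rw [hs, hm]; ring)
    exact ⟨s, t, m, hs, ht, hm⟩
  by_cases hb : b = 0
  · subst hb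
    simp only [Rat.cast_zero, zero_mul, add_zero] at h
    obtain ⟨z, hz⟩ := aux_rat_int h
    exact ⟨2*z, z^2, by push_cast [hz]; ring, by push_cast [hz]; ring⟩
  · set x : ℝ := (a:ℝ) + b * Real.sqrt n with hx
    have hxirr : Irrational x := by
      have := ((aux_irr hn hsf).ratCast_mul hb).ratCast_add a
      simpa [hx] using this
    set P : ℚ[X] := X^2 - (C (2*a) * X - C (a^2 - n*b^2)) with hPdef
    have hPm : P.Monic := monic_X_pow_sub (by
      apply lt_of_le_of_lt (degree_sub_le _ _)
      simp only [max_lt_iff]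
      exact ⟨lt_of_le_of_lt (degree_C_mul_X_le _) (by norm_num),
        lt_of_le_of_lt degree_C_le (by norm_num)⟩)
    have hP0 : aeval x P = 0 := by
      have hsq : Real.sqrt n ^ 2 = (n:ℝ) := Real.sq_sqrt (by positivity)
      have halg : ∀ q : ℚ, (algebraMap ℚ ℝ) q = (q:ℝ) := fun q => rfl
      simp only [hPdef, map_sub, map_mul, map_pow, aeval_X, aeval_C, halg]
      rw [hx]
      push_cast
      nlinarith [hsq]
    have hQint : IsIntegral ℚ x := h.tower_top
    have hdvd : minpoly ℚ x ∣ P := minpoly.dvd ℚ x hP0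
    have hPdeg : P.natDegree = 2 := by
      rw [hPdef]
      compute_degree!
    have hmdeg : (minpoly ℚ x).natDegree = 2 := by
      have hle : (minpoly ℚ x).natDegree ≤ 2 := hPdeg ▸ natDegree_le_of_dvd hdvd hPm.ne_zero
      have hne0 : (minpoly ℚ x).natDegree ≠ 0 := by
        have := minpoly.natDegree_pos hQint
        omega
      have hne1 : (minpoly ℚ x).natDegree ≠ 1 := by
        intro h1
        have hdeg1 : (minpoly ℚ x).degree = 1 := by
          rw [degree_eq_natDegree (minpoly.ne_zero hQint), h1]; rfl
        obtain ⟨y, hy⟩ := minpoly.mem_range_of_degree_eq_one ℚ x hdeg1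
        exact hxirr ⟨y, hy⟩
      omega
    have hPeq : minpoly ℚ x = P := by
      obtain ⟨c, hc⟩ := hdvd
      have hcm : c.Monic := (minpoly.monic hQint).of_mul_monic_left (hc ▸ hPm)
      have hcd : c.natDegree = 0 := by
        have := natDegree_mul (minpoly.ne_zero hQint) hcm.ne_zero
        rw [← hc, hPdeg, hmdeg] at this
        omega
      rw [hc, Polynomial.eq_one_of_monic_natDegree_zero hcm hcd, mul_one]
    have hmap : minpoly ℚ x = (minpoly ℤ x).map (algebraMap ℤ ℚ) :=
      minpoly.isIntegrallyClosed_eq_field_fractions' ℚ h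
    refine ⟨-((minpoly ℤ x).coeff 1), (minpoly ℤ x).coeff 0, ?_, ?_⟩
    · have hc1 : ∀ s m : ℚ, (X^2 - (C s * X - C m) : ℚ[X]).coeff 1 = -s := by
        intro s m; simp [coeff_X_pow, coeff_C]
      have : P.coeff 1 = -(2*a) := hc1 _ _
      have h2 : ((minpoly ℤ x).coeff 1 : ℚ) = P.coeff 1 := by
        rw [← hPeq, hmap, coeff_map]; rfl
      push_cast
      rw [h2, this]; ring
    · have hc0 : ∀ s m : ℚ, (X^2 - (C s * X - C m) : ℚ[X]).coeff 0 = m := by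
        intro s m; simp [coeff_X_pow, coeff_C]
      have : P.coeff 0 = a^2 - n*b^2 := hc0 _ _
      have h2 : ((minpoly ℤ x).coeff 0 : ℚ) = P.coeff 0 := by
        rw [← hPeq, hmap, coeff_map]; rfl
      rw [h2, this]

lemma aux_form_mul {n : ℕ} {x y : ℝ} (hx : ∃ a b : ℚ, x = (a:ℝ) + b * Real.sqrt n)
    (hy : ∃ a b : ℚ, y = (a:ℝ) + b * Real.sqrt n) :
    ∃ a b : ℚ, x * y = (a:ℝ) + b * Real.sqrt n := by
  obtain ⟨a, b, rfl⟩ := hx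
  obtain ⟨c, d, rfl⟩ := hy
  refine ⟨a*c + n*(b*d), a*d + b*c, ?_⟩
  have hsq : Real.sqrt n ^ 2 = (n:ℝ) := Real.sq_sqrt (by positivity)
  push_cast
  linear_combination ((b:ℝ)*(d:ℝ)) * hsq

lemma aux_form_pow {n : ℕ} {x : ℝ} (hx : ∃ a b : ℚ, x = (a:ℝ) + b * Real.sqrt n) (k : ℕ) :
    ∃ a b : ℚ, x^k = (a:ℝ) + b * Real.sqrt n := by
  induction k with
  | zero => exact ⟨1, 0, by norm_num⟩
  | succ k ih => rw [pow_succ]; exact aux_form_mul ih hx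

lemma aux_norm_ne {n : ℕ} (hn : 1 < n) (hsf : Squarefree n) {a b : ℚ}
    (h : (a:ℝ) + b * Real.sqrt n ≠ 0) : a^2 - n*b^2 ≠ 0 := by
  intro h0
  by_cases hb : b = 0
  · subst hb
    have ha2 : a^2 = 0 := by nlinarith [h0]
    have ha : a = 0 := by nlinarith [ha2]
    apply h; rw [ha]; norm_num
  · have hr : Real.sqrt n = |(a/b : ℚ)| := by
      have h1 : ((a/b:ℚ):ℝ)^2 = (n:ℝ) := by
        push_cast
        have hb' : (b:ℝ) ≠ 0 := by exact_mod_cast hb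
        field_simp
        have : (a:ℚ)^2 = n * b^2 := by linarith [h0]
        exact_mod_cast this.trans (mul_comm _ _)
      rw [← h1, Real.sqrt_sq_eq_abs]
      exact (Rat.cast_abs _).symm
    exact (aux_irr hn hsf) ⟨|a/b|, by rw [hr]⟩

lemma aux_form_inv {n : ℕ} (hn : 1 < n) (hsf : Squarefree n) {x : ℝ}
    (hx : ∃ a b : ℚ, x = (a:ℝ) + b * Real.sqrt n) :
    ∃ a b : ℚ, x⁻¹ = (a:ℝ) + b * Real.sqrt n := by
  obtain ⟨a, b, rfl⟩ := hx
  by_cases h0 : (a:ℝ) + b * Real.sqrt n = 0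
  · exact ⟨0, 0, by rw [h0]; norm_num⟩
  · set N : ℚ := a^2 - n*b^2 with hN
    have hNne : N ≠ 0 := aux_norm_ne hn hsf h0
    refine ⟨a/N, -b/N, ?_⟩
    have hsq : Real.sqrt n ^ 2 = (n:ℝ) := Real.sq_sqrt (by positivity)
    have key : ((a:ℝ) + b * Real.sqrt n) * ((a:ℝ) - b * Real.sqrt n) = (N:ℝ) := by
      push_cast [hN]
      linear_combination (-(b:ℝ)^2) * hsq
    have hNr : (N:ℝ) ≠ 0 := by exact_mod_cast hNne
    have hy : ((a/N:ℚ):ℝ) + ((-b/N:ℚ):ℝ) * Real.sqrt n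
        = ((a:ℝ) - b * Real.sqrt n) / (N:ℝ) := by push_cast; ring
    rw [hy]
    rw [inv_eq_of_mul_eq_one_right (b := ((a:ℝ) - b * Real.sqrt n) / (N:ℝ)) (by
      rw [mul_div_assoc'] at *
      rw [key]
      exact div_self hNr)]

set_option maxHeartbeats 1000000 in
/-- Let `K = ℚ(√n)` be a real quadratic field with `n ≠ 2`, and let `ε` be the fundamental
unit of `O_K` (characterized as the smallest unit greater than `1`). Then `2ε` is a square
in `O_K` if and only if one of the Pell equations `x² − ny² = ±2` has an integer solution. -/
theorem stmt_18 (n : ℕ) (hn : 1 < n) (hsf : Squarefree n) (hn2 : n ≠ 2)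
    (ε : ℝ) (hmem : ∃ a b : ℚ, ε = (a : ℝ) + b * Real.sqrt n)
    (hint : IsIntegral ℤ ε) (hinv : IsIntegral ℤ ε⁻¹) (hgt : 1 < ε)
    (hfund : ∀ u : ℝ, (∃ a b : ℚ, u = (a : ℝ) + b * Real.sqrt n) → IsIntegral ℤ u →
      IsIntegral ℤ u⁻¹ → 1 < u → ε ≤ u) :
    (∃ β : ℝ, (∃ a b : ℚ, β = (a : ℝ) + b * Real.sqrt n) ∧ IsIntegral ℤ β ∧
        β ^ 2 = 2 * ε) ↔
      ∃ x y : ℤ, x ^ 2 - n * y ^ 2 = 2 ∨ x ^ 2 - n * y ^ 2 = -2 := by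
  have hsq : Real.sqrt n ^ 2 = (n:ℝ) := Real.sq_sqrt (by positivity)
  obtain ⟨A, B, hAB⟩ := hmem
  have hεne : ε ≠ 0 := by linarith
  have hεABne : (A:ℝ) + B * Real.sqrt n ≠ 0 := by rw [← hAB]; exact hεne
  have hεint' : IsIntegral ℤ ((A:ℝ) + B * Real.sqrt n) := by rwa [hAB] at hint
  obtain ⟨S, T, M, hS, hT, hM⟩ := aux_int_char hn hsf hεint'
  set NQ : ℚ := A^2 - n*B^2 with hNQ
  have hNQne : NQ ≠ 0 := aux_norm_ne hn hsf hεABne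
  have hNQr : (NQ:ℝ) ≠ 0 := by exact_mod_cast hNQne
  -- inverse of ε explicitly
  have hinveq : ε⁻¹ = ((A/NQ : ℚ):ℝ) + ((-B/NQ : ℚ):ℝ) * Real.sqrt n := by
    rw [hAB]
    have key : ((A:ℝ) + B * Real.sqrt n) *
        (((A/NQ : ℚ):ℝ) + ((-B/NQ : ℚ):ℝ) * Real.sqrt n) = 1 := by
      have hNQreal : ((NQ:ℚ):ℝ) = (A:ℝ)^2 - n*B^2 := by rw [hNQ]; push_cast; ring
      push_cast
      field_simp
      linear_combination (-(B:ℝ)^2) * hsq - hNQreal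
    exact inv_eq_of_mul_eq_one_right key
  -- norm of ε is ±1
  have hinvint' : IsIntegral ℤ (((A/NQ : ℚ):ℝ) + ((-B/NQ : ℚ):ℝ) * Real.sqrt n) := by
    rwa [hinveq] at hinv
  obtain ⟨S', T', M', hS', hT', hM'⟩ := aux_int_char hn hsf hinvint'
  have hMNQ : (M:ℚ) = NQ := hM
  have hM'NQ : (M':ℚ) * NQ = 1 := by
    rw [hM']
    field_simp
    ring
  have hMM' : M' * M = 1 := by
    have : (M':ℚ) * M = 1 := by rw [hMNQ]; exact hM'NQ
    exact_mod_cast this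
  have hMpm : M = 1 ∨ M = -1 := by
    rcases (Int.mul_eq_one_iff_eq_one_or_neg_one.mp hMM') with ⟨_, h⟩ | ⟨_, h⟩
    · exact Or.inl h
    · exact Or.inr h
  have h4dvdn : ¬ ((4:ℤ) ∣ (n:ℤ)) := by
    intro hdvd
    have h4 : (2*2 : ℕ) ∣ n := by exact_mod_cast hdvd
    have := hsf 2 h4
    rw [Nat.isUnit_iff] at this
    omega
  constructor
  · rintro ⟨β, ⟨a, b, rfl⟩, hβint, hβsq⟩
    obtain ⟨s, t, m, hs, ht, hm⟩ := aux_int_char hn hsf hβint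
    -- component equations
    have hcomp : ((a^2 + n*b^2 : ℚ):ℝ) + ((2*(a*b) : ℚ):ℝ) * Real.sqrt n
        = ((2*A : ℚ):ℝ) + ((2*B : ℚ):ℝ) * Real.sqrt n := by
      push_cast
      linear_combination hβsq + 2*hAB - (b:ℝ)^2 * hsq
    obtain ⟨h1, h2⟩ := aux_unique hn hsf hcomp
    have hab : a*b = B := by linarith
    -- norm squared identity
    have hnormsq : (a^2 - n*b^2)^2 = 4*(A^2 - n*B^2) := by
      linear_combination (a^2 + n*b^2 + 2*A)*h1 - (4*(n:ℚ)*(a*b + B))*hab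
    have hm2 : m^2 = 4*M := by
      have : (m:ℚ)^2 = 4*M := by rw [hm, hMNQ]; exact hnormsq
      exact_mod_cast this
    have hmpm : m = 2 ∨ m = -2 := by
      rcases hMpm with h | h
      · rw [h] at hm2
        have h4 : (m-2)*(m+2) = 0 := by linear_combination hm2
        rcases mul_eq_zero.mp h4 with h | h
        · left; omega
        · right; omega
      · rw [h] at hm2; nlinarith [sq_nonneg m]
    -- integer equations
    have e1 : s^2 - (n:ℤ)*t^2 = 4*m := by
      have : (s:ℚ)^2 - (n:ℚ)*t^2 = 4*m := by rw [hs, ht, hm]; ring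
      exact_mod_cast this
    have e2 : s^2 + (n:ℤ)*t^2 = 4*S := by
      have : (s:ℚ)^2 + (n:ℚ)*t^2 = 4*S := by
        rw [hs, ht]; linear_combination 4*h1 - 4*hS
      exact_mod_cast this
    have e3 : s*t = 2*T := by
      have : (s:ℚ)*t = 2*T := by rw [hs, ht]; linear_combination 4*hab - 2*hT
      exact_mod_cast this
    rcases Int.even_or_odd s with ⟨i, hi⟩ | ⟨i, hi⟩ <;>
      rcases Int.even_or_odd t with ⟨j, hj⟩ | ⟨j, hj⟩
    · -- s, t both even
      refine ⟨i, j, ?_⟩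
      rw [hi, hj] at e1
      have hij : 4*(i^2 - (n:ℤ)*j^2) = 4*m := by linear_combination e1
      have hij2 : i^2 - (n:ℤ)*j^2 = m := by linarith
      rcases hmpm with h | h
      · left; rw [hij2, h]
      · right; rw [hij2, h]
    · -- s even, t odd : 4 ∣ n
      exfalso
      rw [hi, hj] at e1
      obtain ⟨w, hw⟩ : ∃ w : ℤ, (n:ℤ) = 4*w :=
        ⟨i^2 - m - n*j^2 - n*j, by linear_combination -e1⟩
      exact h4dvdn ⟨w, hw⟩
    · -- s odd, t even : contradiction mod 4
      exfalso
      rw [hi, hj] at e2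
      obtain ⟨w, hw⟩ : ∃ w : ℤ, 4*w + 1 = 4*S :=
        ⟨i^2 + i + n*j^2, by linear_combination e2⟩
      omega
    · -- s odd, t odd : st odd but st = 2T
      exfalso
      rw [hi, hj] at e3
      obtain ⟨w, hw⟩ : ∃ w : ℤ, 4*w + 2*i + 2*j + 1 = 2*T :=
        ⟨i*j, by linear_combination e3⟩
      omega
  · rintro ⟨x, y, hxy⟩
    obtain ⟨h, hxh, hpm⟩ : ∃ h : ℤ, x^2 - (n:ℤ)*y^2 = 2*h ∧ (h = 1 ∨ h = -1) := by
      rcases hxy with h' | h'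
      · exact ⟨1, by linarith, Or.inl rfl⟩
      · exact ⟨-1, by linarith, Or.inr rfl⟩
    have hn3 : 3 ≤ n := by omega
    have hn3' : (3:ℤ) ≤ (n:ℤ) := by exact_mod_cast hn3
    have key2 : ∀ z : ℤ, z^2 ≠ 2 := by
      intro z hz
      rcases (by omega : 2 ≤ |z| ∨ |z| ≤ 1) with h' | h'
      · nlinarith [sq_abs z, abs_nonneg z]
      · nlinarith [sq_abs z, abs_nonneg z]
    have hy0 : y ≠ 0 := by
      intro h0
      rw [h0] at hxh
      norm_num at hxh
      rcases hpm with h1 | h1 <;> rw [h1] at hxh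
      · exact key2 x (by linarith)
      · nlinarith [sq_nonneg x]
    have hy1 : 1 ≤ y^2 := by rcases lt_or_gt_of_ne hy0 with h' | h' <;> nlinarith
    have hx0 : x ≠ 0 := by
      intro h0
      rw [h0] at hxh
      norm_num at hxh
      rcases hpm with h1 | h1 <;> rw [h1] at hxh <;> nlinarith [hn3', hy1]
    set p := |x| with hpdef
    set q := |y| with hqdef
    have hp1 : 1 ≤ p := Int.one_le_abs hx0
    have hq1 : 1 ≤ q := Int.one_le_abs hy0
    have hp2 : p^2 = x^2 := sq_abs x
    have hq2 : q^2 = y^2 := sq_abs y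
    obtain ⟨E, hE⟩ : ∃ E : ℤ, E = (n:ℤ)*y^2 + h := ⟨_, rfl⟩
    have hh1 : h*h = 1 := by rcases hpm with h1 | h1 <;> rw [h1] <;> norm_num
    have hE2 : 2*E = p^2 + (n:ℤ)*q^2 := by rw [hp2, hq2, hE]; linarith
    have hnorm : E^2 - (n:ℤ)*(p*q)^2 = 1 := by
      have hpq2 : (p*q)^2 = x^2*y^2 := by rw [mul_pow, hp2, hq2]
      rw [hpq2, hE]
      linear_combination (-(n:ℤ)*y^2) * hxh + hh1
    have hnormQ : (E:ℚ)^2 - (n:ℚ)*((p:ℚ)*(q:ℚ))^2 = 1 := by exact_mod_cast hnorm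
    have hr1 : (1:ℝ) < Real.sqrt n := by
      have h3 : (3:ℝ) ≤ (n:ℝ) := by exact_mod_cast hn3
      have := Real.sqrt_lt_sqrt (by norm_num : (0:ℝ) ≤ 1) (show (1:ℝ) < (n:ℝ) by linarith)
      simpa using this
    set β₀ : ℝ := ((p:ℚ):ℝ) + ((q:ℚ):ℝ) * Real.sqrt n with hβ₀
    set u : ℝ := ((E:ℚ):ℝ) + (((p*q : ℤ):ℚ):ℝ) * Real.sqrt n with hu
    have hβu : β₀^2 = 2*u := by
      rw [hβ₀, hu]
      have hE2' : ((2*E : ℤ):ℝ) = (p:ℝ)^2 + n*(q:ℝ)^2 := by exact_mod_cast hE2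
      push_cast
      push_cast at hE2'
      linear_combination ((q:ℝ)^2) * hsq - hE2'
    have hp1' : (1:ℝ) ≤ (p:ℝ) := by exact_mod_cast hp1
    have hq1' : (1:ℝ) ≤ (q:ℝ) := by exact_mod_cast hq1
    have hβ₀gt : 2 < β₀ := by
      rw [hβ₀]
      push_cast
      nlinarith [hr1]
    have hugt : 1 < u := by nlinarith [hβu, hβ₀gt]
    have huform : ∃ a b : ℚ, u = (a:ℝ) + b * Real.sqrt n := ⟨(E:ℚ), ((p*q : ℤ):ℚ), hu⟩
    have huint : IsIntegral ℤ u := by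
      rw [hu]
      exact aux_int_of _ _ (2*E) 1 (by push_cast; ring) (by push_cast; linear_combination -hnormQ)
    have huinveq : u⁻¹ = ((E:ℚ):ℝ) + (((-(p*q) : ℤ):ℚ):ℝ) * Real.sqrt n := by
      rw [hu]
      refine inv_eq_of_mul_eq_one_right ?_
      have hnorm' : ((E:ℝ))^2 - n*((p:ℝ)*(q:ℝ))^2 = 1 := by exact_mod_cast hnorm
      push_cast
      linear_combination hnorm' - ((p:ℝ)*(q:ℝ))^2 * hsq
    have huinv : IsIntegral ℤ u⁻¹ := by
      rw [huinveq]
      exact aux_int_of _ _ (2*E) 1 (by push_cast; ring) (by push_cast; linear_combination -hnormQ)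
    have hεinvform : ∃ a b : ℚ, ε⁻¹ = (a:ℝ) + b * Real.sqrt n :=
      aux_form_inv hn hsf ⟨A, B, hAB⟩
    have hεpos : (0:ℝ) < ε := by linarith
    -- u is a positive power of ε
    obtain ⟨k, hk1, hk⟩ : ∃ k : ℕ, 1 ≤ k ∧ u = ε^k := by
      have hex : ∃ j : ℕ, u < ε^j := pow_unbounded_of_one_lt u hgt
      classical
      set j := Nat.find hex with hjdef
      have hj : u < ε^j := Nat.find_spec hex
      have hj0 : j ≠ 0 := by
        intro h0
        rw [h0, pow_zero] at hj
        linarith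
      have hjle : ε^(j-1) ≤ u := by
        have := Nat.find_min hex (show j - 1 < j by omega)
        linarith [not_lt.mp this]
      set k := j - 1 with hkdef
      have hεkpos : (0:ℝ) < ε^k := pow_pos hεpos k
      have hεkne : (ε:ℝ)^k ≠ 0 := ne_of_gt hεkpos
      set v := u * (ε⁻¹)^k with hv
      have hveq : v = u / ε^k := by rw [hv, inv_pow, div_eq_mul_inv]
      have hv1 : 1 ≤ v := by
        rw [hveq, le_div_iff₀ hεkpos, one_mul]
        exact hjle
      have hv2 : v < ε := by
        rw [hveq, div_lt_iff₀ hεkpos]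
        calc u < ε^j := hj
          _ = ε * ε^k := by rw [show j = k + 1 from by omega, pow_succ]; ring
      rcases eq_or_lt_of_le hv1 with hveq1 | hvgt
      · have hueq : u = ε^k := by
          have hdiv : u / ε^k = 1 := by rw [← hveq]; exact hveq1.symm
          exact (div_eq_one_iff_eq hεkne).mp hdiv
        refine ⟨k, ?_, hueq⟩
        by_contra h0
        have hk0 : k = 0 := by omega
        rw [hk0, pow_zero] at hueq
        linarith
      · exfalso
        have hvform : ∃ a b : ℚ, v = (a:ℝ) + b * Real.sqrt n :=
          aux_form_mul huform (aux_form_pow hεinvform k)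
        have hvint : IsIntegral ℤ v := huint.mul (hinv.pow k)
        have hvinveq : v⁻¹ = u⁻¹ * ε^k := by rw [hv, mul_inv, inv_pow, inv_inv]
        have hvinv : IsIntegral ℤ v⁻¹ := by rw [hvinveq]; exact huinv.mul (hint.pow k)
        have := hfund v hvform hvint hvinv hvgt
        linarith
    have hβ₀form : ∃ a b : ℚ, β₀ = (a:ℝ) + b * Real.sqrt n := ⟨(p:ℚ), (q:ℚ), hβ₀⟩
    have hβ₀int : IsIntegral ℤ β₀ := by
      rw [hβ₀]
      refine aux_int_of _ _ (2*p) (2*h) (by push_cast; ring) ?_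
      have : (x:ℚ)^2 - (n:ℚ)*(y:ℚ)^2 = 2*(h:ℚ) := by exact_mod_cast hxh
      have hp2' : ((p:ℚ))^2 = (x:ℚ)^2 := by exact_mod_cast hp2
      have hq2' : ((q:ℚ))^2 = (y:ℚ)^2 := by exact_mod_cast hq2
      push_cast
      rw [hp2', hq2']
      linarith
    rcases Nat.even_or_odd k with ⟨w, hw⟩ | ⟨w, hw⟩
    · -- k even : contradiction
      exfalso
      set γ : ℝ := β₀ * (ε⁻¹)^w with hγ
      have hεkne : (ε:ℝ)^(w+w) ≠ 0 := pow_ne_zero _ (ne_of_gt hεpos)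
      have hγ2 : γ^2 = 2 := by
        rw [hγ, mul_pow, hβu, hk, hw]
        field_simp
        rw [one_div, inv_pow, inv_pow, ← pow_mul, mul_two, mul_inv_cancel₀ (pow_ne_zero _ hεpos.ne')]
      obtain ⟨c, d, hcd⟩ := aux_form_mul hβ₀form (aux_form_pow hεinvform w)
      have hγ2' : ((c:ℝ) + d * Real.sqrt n)^2 = 2 := by rw [← hcd]; exact hγ2
      have hcomp2 : ((c^2 + n*d^2 : ℚ):ℝ) + ((2*(c*d) : ℚ):ℝ) * Real.sqrt n
          = ((2 : ℚ):ℝ) + ((0 : ℚ):ℝ) * Real.sqrt n := by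
        push_cast
        linear_combination hγ2' - (d:ℝ)^2 * hsq
      obtain ⟨hc1, hc2⟩ := aux_unique hn hsf hcomp2
      have hcd0 : c*d = 0 := by linarith
      rcases mul_eq_zero.mp hcd0 with hc0 | hd0
      · -- c = 0 : n d² = 2 impossible
        rw [hc0] at hc1
        have hnd : (n:ℚ)*d^2 = ((2:ℤ):ℚ) := by push_cast; linarith
        obtain ⟨z, hz⟩ := aux_den hsf d 2 hnd
        rw [← hz] at hnd
        have hnz : (n:ℤ)*z^2 = 2 := by exact_mod_cast hnd
        have hz0 : z ≠ 0 := by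
          intro h0
          rw [h0] at hnz
          norm_num at hnz
        have hz1 : 1 ≤ z^2 := by rcases lt_or_gt_of_ne hz0 with h' | h' <;> nlinarith
        nlinarith
      · -- d = 0 : c² = 2 impossible
        rw [hd0] at hc1
        have hc2' : (c:ℚ)^2 = 2 := by linarith
        have hcr : ((c:ℝ))^2 = 2 := by exact_mod_cast hc2'
        have : Real.sqrt 2 = |(c:ℝ)| := by
          rw [show (2:ℝ) = ((c:ℝ))^2 from hcr.symm, Real.sqrt_sq_eq_abs]
        exact irrational_sqrt_two ⟨|c|, by rw [Rat.cast_abs, ← this]⟩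
    · -- k odd : β₀ * (ε⁻¹)^w works
      refine ⟨β₀ * (ε⁻¹)^w, aux_form_mul hβ₀form (aux_form_pow hεinvform w),
        hβ₀int.mul (hinv.pow w), ?_⟩
      have hε2wne : (ε:ℝ)^(2*w) ≠ 0 := pow_ne_zero _ (ne_of_gt hεpos)
      rw [mul_pow, hβu, hk, hw]
      field_simp
      rw [one_div, inv_pow, inv_pow, ← pow_mul, pow_succ, mul_comm w 2, mul_right_comm,
        mul_inv_cancel₀ (pow_ne_zero _ hεpos.ne'), one_mul]
end
end

section
/- In the real quadratic field F = ℚ(√10), no nondiagonalizable classical totally positive definite ternary quadratic form of the shape ⟨1⟩ ⊥ Q₀, where Q₀ is a binary form with Q₀(e) = 2 for some e ∈ O_F² whose coordinate ideal is not all of O_F, represents the element 4 + √10. -/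
/-- Total positivity in `F = ℚ(√10)`, whose ring of integers is `ℤ[√10] = ℤ√10`:
both real embeddings (sending `√10` to `±√10`) are positive. -/
def Z10TotPos (z : ℤ√10) : Prop :=
  0 < (z.re : ℝ) + z.im * Real.sqrt 10 ∧ 0 < (z.re : ℝ) - z.im * Real.sqrt 10

/-- No integer squares to 6. -/
lemma aux_no_sq6 (k : ℤ) (h : k ^ 2 = 6) : False := by
  have h1 : -3 ≤ k := by nlinarith
  have h2 : k ≤ 3 := by nlinarith
  interval_cases k <;> omega

/-- No integer squares to 24. -/
lemma aux_no_sq24 (k : ℤ) (h : k ^ 2 = 24) : False := by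
  have h1 : -5 ≤ k := by nlinarith
  have h2 : k ≤ 5 := by nlinarith
  interval_cases k <;> omega

/-- `2x² - 5y² = ±1` is impossible (look mod 5). -/
lemma aux_mod5 (x y : ℤ) (h : 2 * x ^ 2 - 5 * y ^ 2 = 1 ∨ 2 * x ^ 2 - 5 * y ^ 2 = -1) :
    False := by
  have key : ∀ z : ZMod 5, 2 * z ^ 2 ≠ 1 ∧ 2 * z ^ 2 ≠ -1 := by decide
  rcases h with h | h <;>
  · have := congrArg (fun n : ℤ => (n : ZMod 5)) h
    push_cast at this
    have h5 : (5 : ZMod 5) = 0 := by decide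
    first
    | exact (key (x : ZMod 5)).1 (by linear_combination this + (y : ZMod 5) ^ 2 * h5)
    | exact (key (x : ZMod 5)).2 (by linear_combination this + (y : ZMod 5) ^ 2 * h5)

/-- If the second factor has even real part, so does the product. -/
lemma aux_dvd_mul_right (z y : ℤ√10) (h : 2 ∣ y.re) : 2 ∣ (z * y).re := by
  obtain ⟨k, hk⟩ := h
  exact ⟨z.re * k + 5 * z.im * y.im, by rw [Zsqrtd.re_mul, hk]; ring⟩

/-- If the first factor has even real part, so does the product. -/
lemma aux_dvd_mul_left (z y : ℤ√10) (h : 2 ∣ z.re) : 2 ∣ (z * y).re := by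
  obtain ⟨k, hk⟩ := h
  exact ⟨k * y.re + 5 * z.im * y.im, by rw [Zsqrtd.re_mul, hk]; ring⟩

/-- If `e₁` has odd real part, the ideal `(e₁, e₂)` is everything
(given that the form represents 2 at `(e₁, e₂)`). -/
lemma aux_span_top (a b c e₁ e₂ : ℤ√10)
    (he : a * e₁ ^ 2 + 2 * b * e₁ * e₂ + c * e₂ ^ 2 = 2)
    (h1 : ¬ (2 ∣ e₁.re)) : Ideal.span ({e₁, e₂} : Set (ℤ√10)) = ⊤ := by
  obtain ⟨x, hx⟩ : ∃ x : ℤ, 1 - e₁.re = 2 * x := ⟨(1 - e₁.re) / 2, by omega⟩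
  set p : ℤ√10 := 1 - e₁ with hp
  set γ : ℤ√10 := ⟨2 * x ^ 2 + 5 * e₁.im ^ 2, -2 * x * e₁.im⟩ with hγ
  have hpre : p.re = 2 * x := by
    simp only [hp, Zsqrtd.re_sub, Zsqrtd.re_one]; omega
  have hpim : p.im = -e₁.im := by
    simp only [hp, Zsqrtd.im_sub, Zsqrtd.im_one]; ring
  have hp2 : p ^ 2 = 2 * γ := by
    ext
    · simp only [pow_two, Zsqrtd.re_mul, hpre, hpim, hγ]
      norm_num; ring
    · simp only [pow_two, Zsqrtd.im_mul, hpre, hpim, hγ]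
      norm_num; ring
  rw [Ideal.eq_top_iff_one, Ideal.mem_span_pair]
  refine ⟨e₁ * (e₁ + 3 * p) + γ * (3 * e₁ + p) * (a * e₁ + 2 * b * e₂),
    γ * (3 * e₁ + p) * (c * e₂), ?_⟩
  have hp1 : p = 1 - e₁ := hp
  linear_combination γ * (3 * e₁ + p) * he - (3 * e₁ + p) * hp2 +
    ((e₁ + p) ^ 2 + (e₁ + p) + 1) * hp1

/-- In `F = ℚ(√10)`, no nondiagonalizable classical totally positive definite ternary form
`⟨1⟩ ⊥ Q₀`, where `Q₀(v, w) = a v² + 2b vw + c w²` is a binary form over `O_F = ℤ[√10]`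
with `Q₀(e) = 2` for some vector `e = (e₁, e₂)` whose coordinate ideal `(e₁, e₂)` is not
all of `O_F`, represents the element `4 + √10`. -/
theorem stmt_19 (a b c : ℤ√10)
    (hpd : ∀ v w : ℤ√10, ¬(v = 0 ∧ w = 0) →
      Z10TotPos (a * v ^ 2 + 2 * b * v * w + c * w ^ 2))
    (hnondiag : ¬ ∃ p q r s : ℤ√10, IsUnit (p * s - q * r) ∧
      a * p * q + b * (p * s + q * r) + c * r * s = 0)
    (e₁ e₂ : ℤ√10) (he : a * e₁ ^ 2 + 2 * b * e₁ * e₂ + c * e₂ ^ 2 = 2)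
    (hI : Ideal.span ({e₁, e₂} : Set (ℤ√10)) ≠ ⊤) :
    ¬ ∃ u v w : ℤ√10,
        u ^ 2 + (a * v ^ 2 + 2 * b * v * w + c * w ^ 2) = 4 + Zsqrtd.sqrtd := by
  rintro ⟨u, v, w, huvw⟩
  have hr0 : (0:ℝ) ≤ Real.sqrt 10 := Real.sqrt_nonneg 10
  have hr2 : Real.sqrt 10 ^ 2 = 10 := Real.sq_sqrt (by norm_num)
  have hr3 : (3:ℝ) < Real.sqrt 10 := by nlinarith
  -- Step 0 : both coordinates of e have even real part
  have he1 : 2 ∣ e₁.re := by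
    by_contra h1
    exact hI (aux_span_top a b c e₁ e₂ he h1)
  have he2 : 2 ∣ e₂.re := by
    by_contra h2
    refine hI ?_
    rw [Set.pair_comm]
    exact aux_span_top c b a e₂ e₁ (by linear_combination he) h2
  -- Step 1 : u = 0 and the binary form represents 4 + √10
  have hf : a * v ^ 2 + 2 * b * v * w + c * w ^ 2 = 4 + Zsqrtd.sqrtd := by
    by_cases hvw : v = 0 ∧ w = 0
    · -- then u² = 4 + √10, impossible by norms
      exfalso
      rw [hvw.1, hvw.2] at huvw
      have hu2 : u ^ 2 = 4 + Zsqrtd.sqrtd := by linear_combination huvw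
      have hn := congrArg Zsqrtd.norm hu2
      rw [pow_two, Zsqrtd.norm_mul] at hn
      have : Zsqrtd.norm u ^ 2 = 6 := by
        rw [pow_two, hn, Zsqrtd.norm_def]
        simp [Zsqrtd.re_add, Zsqrtd.im_add]
      exact aux_no_sq6 _ this
    · have hq := hpd v w hvw
      have hQval : a * v ^ 2 + 2 * b * v * w + c * w ^ 2 =
          4 + Zsqrtd.sqrtd - u ^ 2 := by linear_combination huvw
      rw [hQval] at hq
      obtain ⟨hq1, hq2⟩ := hq
      have hqre : (4 + Zsqrtd.sqrtd - u ^ 2).re = 4 - (u.re ^ 2 + 10 * u.im ^ 2) := by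
        simp [pow_two, Zsqrtd.re_sub, Zsqrtd.re_add, Zsqrtd.re_mul]; ring
      have hqim : (4 + Zsqrtd.sqrtd - u ^ 2).im = 1 - 2 * u.re * u.im := by
        simp [pow_two, Zsqrtd.im_sub, Zsqrtd.im_add, Zsqrtd.im_mul]; ring
      -- the sum of the two embeddings is positive, so the re part is positive
      have hrepos : 0 < (4 + Zsqrtd.sqrtd - u ^ 2).re := by
        have h' : (0:ℝ) < ((4 + Zsqrtd.sqrtd - u ^ 2).re : ℝ) := by linarith
        exact_mod_cast h' 
      rw [hqre] at hrepos
      have him : u.im = 0 := by nlinarith [sq_nonneg u.re, sq_nonneg u.im]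
      have hub : u.re ^ 2 < 4 := by nlinarith
      have hu : u = 0 := by
        by_contra hu0
        -- then u.re = ±1 and the second embedding of 3 + √10 is negative
        have h0 : u.re ≠ 0 := by
          intro h0
          exact hu0 (Zsqrtd.ext (by rw [h0]; rfl) (by rw [him]; rfl))
        have hb1 : -1 ≤ u.re := by nlinarith
        have hb2 : u.re ≤ 1 := by nlinarith
        have hre1 : u.re ^ 2 = 1 := by
          rcases (by omega : u.re = -1 ∨ u.re = 1) with h | h <;> rw [h] <;> norm_num
        have : (4 + Zsqrtd.sqrtd - u ^ 2).re = 3 := by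
          rw [hqre, hre1, him]; norm_num
        have h2' : ((4 + Zsqrtd.sqrtd - u ^ 2).im : ℝ) = 1 := by
          rw [hqim, him]; push_cast; ring
        rw [this] at hq2
        rw [h2'] at hq2
        push_cast at hq2
        linarith
      rw [hu] at huvw
      linear_combination huvw
  -- Step 2 : set up B, m and the two key identities
  set B : ℤ√10 := a * (e₁ * v) + b * (e₁ * w + e₂ * v) + c * (e₂ * w) with hB
  set m : ℤ√10 := e₁ * w - e₂ * v with hm
  have I1 : 2 * (4 + Zsqrtd.sqrtd) - B ^ 2 = (a * c - b ^ 2) * m ^ 2 := by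
    rw [hB, hm]
    linear_combination (-(a * v ^ 2 + 2 * b * v * w + c * w ^ 2)) * he - 2 * hf
  have hmdvd : 2 ∣ m.re := by
    rw [hm, Zsqrtd.re_sub]
    exact dvd_sub (aux_dvd_mul_left _ _ he1) (aux_dvd_mul_left _ _ he2)
  -- Step 3 : B = 0
  have hBdvd : 2 ∣ B.re := by
    rw [hB, Zsqrtd.re_add, Zsqrtd.re_add]
    refine dvd_add (dvd_add (aux_dvd_mul_right _ _ ?_) (aux_dvd_mul_right _ _ ?_))
      (aux_dvd_mul_right _ _ ?_)
    · exact aux_dvd_mul_left _ _ he1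
    · rw [Zsqrtd.re_add]
      exact dvd_add (aux_dvd_mul_left _ _ he1) (aux_dvd_mul_left _ _ he2)
    · exact aux_dvd_mul_left _ _ he2
  by_cases hg : 2 * v - B * e₁ = 0 ∧ 2 * w - B * e₂ = 0
  · -- degenerate case: m = 0 and B² = 8 + 2√10, impossible by norms
    have h2m : 2 * m = 0 := by
      rw [hm]; linear_combination e₁ * hg.2 - e₂ * hg.1
    have hm0 : m = 0 := by
      ext
      · have := congrArg Zsqrtd.re h2m
        simp [Zsqrtd.re_mul] at this
        simpa using this
      · have := congrArg Zsqrtd.im h2m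
        simp [Zsqrtd.im_mul] at this
        simpa using this
    rw [hm0] at I1
    have hB2 : B ^ 2 = 2 * (4 + Zsqrtd.sqrtd) := by linear_combination -I1
    have hn := congrArg Zsqrtd.norm hB2
    rw [pow_two, Zsqrtd.norm_mul] at hn
    have : Zsqrtd.norm B ^ 2 = 24 := by
      rw [pow_two, hn, Zsqrtd.norm_def]
      simp [Zsqrtd.re_mul, Zsqrtd.im_mul, Zsqrtd.re_add, Zsqrtd.im_add]
    exact aux_no_sq24 _ this
  · have hE := hpd (2 * v - B * e₁) (2 * w - B * e₂) hg
    have I2 : a * (2 * v - B * e₁) ^ 2 + 2 * b * (2 * v - B * e₁) * (2 * w - B * e₂)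
        + c * (2 * w - B * e₂) ^ 2 = 2 * (2 * (4 + Zsqrtd.sqrtd) - B ^ 2) := by
      rw [hB]
      linear_combination B ^ 2 * he + 4 * hf
    rw [I2] at hE
    obtain ⟨s, hs⟩ := hBdvd
    obtain ⟨hE1, hE2⟩ := hE
    have hEre : (2 * (2 * (4 + Zsqrtd.sqrtd) - B ^ 2)).re
        = 16 - (8 * s ^ 2 + 20 * B.im ^ 2) := by
      simp [pow_two, Zsqrtd.re_mul, Zsqrtd.im_mul, Zsqrtd.re_add, Zsqrtd.im_add,
        Zsqrtd.re_sub, hs]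
      ring
    have hEim : (2 * (2 * (4 + Zsqrtd.sqrtd) - B ^ 2)).im = 4 - 8 * s * B.im := by
      simp [pow_two, Zsqrtd.re_mul, Zsqrtd.im_mul, Zsqrtd.re_add, Zsqrtd.im_add,
        Zsqrtd.im_sub, hs]
      ring
    have hrepos : 0 < (2 * (2 * (4 + Zsqrtd.sqrtd) - B ^ 2)).re := by
      have h' : (0:ℝ) < ((2 * (2 * (4 + Zsqrtd.sqrtd) - B ^ 2)).re : ℝ) := by linarith
      exact_mod_cast h' 
    rw [hEre] at hrepos
    have htB : B.im = 0 := by nlinarith [sq_nonneg s, sq_nonneg B.im]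
    have hsB : s = 0 := by
      by_contra hs0
      have h1 : 1 ≤ s ^ 2 := by
        rcases lt_or_gt_of_ne hs0 with h | h <;> nlinarith
      have h1' : (1:ℝ) ≤ (s:ℝ) ^ 2 := by exact_mod_cast h1
      rw [hEre, hEim, htB] at hE2
      push_cast at hE2
      nlinarith
    have hB0 : B = 0 := by
      ext
      · rw [hs, hsB]; rfl
      · rw [htB]; rfl
    -- Step 4 : the norm equation 24 = N(ac - b²) · N(m)²
    rw [hB0] at I1
    have I1' : (2 : ℤ√10) * (4 + Zsqrtd.sqrtd) = (a * c - b ^ 2) * m ^ 2 := by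
      linear_combination I1
    have hL : Zsqrtd.norm (2 * (4 + Zsqrtd.sqrtd) : ℤ√10) = 24 := by
      rw [Zsqrtd.norm_def]
      simp [Zsqrtd.re_mul, Zsqrtd.im_mul, Zsqrtd.re_add, Zsqrtd.im_add]
    have hmn : Zsqrtd.norm (m ^ 2) = Zsqrtd.norm m ^ 2 := by
      rw [pow_two, Zsqrtd.norm_mul, pow_two]
    have h24 : (24 : ℤ) = Zsqrtd.norm (a * c - b ^ 2) * Zsqrtd.norm m ^ 2 := by
      rw [← hL, I1', Zsqrtd.norm_mul, hmn]
    obtain ⟨x, hx⟩ := hmdvd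
    have hnm : Zsqrtd.norm m = 2 * (2 * x ^ 2 - 5 * m.im ^ 2) := by
      rw [Zsqrtd.norm_def, hx]; ring
    rw [hnm] at h24
    generalize hky : 2 * x ^ 2 - 5 * m.im ^ 2 = k at h24
    generalize hnd : Zsqrtd.norm (a * c - b ^ 2) = nd at h24
    have h6 : nd * k ^ 2 = 6 := by
      have h4 : 4 * (nd * k ^ 2) = 4 * 6 := by linear_combination -h24
      exact mul_left_cancel₀ (by norm_num : (4:ℤ) ≠ 0) h4
    have hdvd : k ^ 2 ∣ 6 := ⟨nd, by linear_combination -h6⟩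
    have hkb : k ^ 2 ≤ 6 := Int.le_of_dvd (by norm_num) hdvd
    have hk1 : -2 ≤ k := by nlinarith
    have hk2 : k ≤ 2 := by nlinarith
    interval_cases k
    · exfalso; omega
    · exact aux_mod5 x m.im (Or.inr hky)
    · exfalso; omega
    · exact aux_mod5 x m.im (Or.inl hky)
    · exfalso; omega
end
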